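/- arXiv:2112.02358 — 3 statements merged into one kernel-verified Lean document; each statement's English description precedes it below -/
import Mathlib

section
/- There exist absolute constants 0 < c₁ ≤ c₂ and an integer a₀ ≥ 1 such that for all integers a ≥ a₀ and k ≥ 1 (with α = 2^{−a} and σ, w the lacunary weights constructed from a): c₁·2^{−k(2−α)} ≤ ∫_0^{2^{−k}} w(x) dx ≤ c₂·2^{−k(2−α)} and c₁·α^{−1}·2^{−kα} ≤ ∫_0^{2^{−k}} σ(x) dx ≤ c₂·α^{−1}·2^{−kα}. -/
open MeasureTheory Set Filter
open scoped ENNReal NNReal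

noncomputable section

/-- The average of `|f|` over the interval with endpoints `a < b`. -/
def avgE (f : ℝ → ℝ) (a b : ℝ) : ℝ≥0∞ :=
  (ENNReal.ofReal (b - a))⁻¹ * ∫⁻ x in Set.Ioo a b, ENNReal.ofReal |f x|

/-- `M_B f` for the interval `B` with endpoints `a`, `b`: the supremum of the averages of `|f|`
over all bounded intervals containing `B`. -/
def MB (f : ℝ → ℝ) (a b : ℝ) : ℝ≥0∞ :=
  ⨆ (c : ℝ) (d : ℝ) (_ : c ≤ a) (_ : b ≤ d) (_ : c < d), avgE f c d

/-- The uncentered Hardy–Littlewood maximal function. -/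
def maxFn (f : ℝ → ℝ) (x : ℝ) : ℝ≥0∞ :=
  ⨆ (c : ℝ) (d : ℝ) (_ : c ≤ x) (_ : x ≤ d) (_ : c < d), avgE f c d

/-- A `γ`-sparse family of intervals, an interval being encoded by its pair of endpoints. -/
def IsSparse (γ : ℝ) (S : Set (ℝ × ℝ)) : Prop :=
  S.Countable ∧ (∀ p ∈ S, p.1 < p.2) ∧
    ∃ E : ℝ × ℝ → Set ℝ,
      (∀ p ∈ S, MeasurableSet (E p) ∧ E p ⊆ Set.Ico p.1 p.2 ∧
        ENNReal.ofReal (γ * (p.2 - p.1)) ≤ volume (E p)) ∧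
      S.PairwiseDisjoint E

/-- The strong-sparse operator `𝒜*_S f = Σ_{A ∈ S} (M_A f)·1_A`. -/
def sparseOpStar (S : Set (ℝ × ℝ)) (f : ℝ → ℝ) (x : ℝ) : ℝ≥0∞ :=
  ∑' p : S,
    (Set.Ico (p : ℝ × ℝ).1 (p : ℝ × ℝ).2).indicator
      (fun _ => MB f (p : ℝ × ℝ).1 (p : ℝ × ℝ).2) x

/-- The measure `w dx` associated with a weight `w`. -/
def wMeas (w : ℝ → ℝ) : Measure ℝ := volume.withDensity fun x => ENNReal.ofReal (w x)

/-- A weight: a positive, measurable, locally integrable function on `ℝ`. -/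
def IsWeight (w : ℝ → ℝ) : Prop :=
  Measurable w ∧ (∀ x, 0 < w x) ∧ LocallyIntegrable w volume

/-- The `A₂` characteristic of a weight. -/
def A2 (w : ℝ → ℝ) : ℝ≥0∞ :=
  ⨆ (a : ℝ) (b : ℝ) (_ : a < b), avgE w a b * avgE (fun x => (w x)⁻¹) a b

/-- The Fujii–Wilson `A∞` characteristic of a weight. -/
def AInf (w : ℝ → ℝ) : ℝ≥0∞ :=
  ⨆ (a : ℝ) (b : ℝ) (_ : a < b),
    (wMeas w (Set.Ioo a b))⁻¹ * ∫⁻ x in Set.Ioo a b, maxFn ((Set.Ioo a b).indicator w) x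

/-- The `L²(w)` norm of a real-valued function. -/
def L2w (f : ℝ → ℝ) (w : ℝ → ℝ) : ℝ≥0∞ :=
  (∫⁻ x, ENNReal.ofReal (f x ^ 2) * ENNReal.ofReal (w x)) ^ (1/2 : ℝ)

/-- The `L²(w)` norm of an `ℝ≥0∞`-valued function. -/
def L2wE (g : ℝ → ℝ≥0∞) (w : ℝ → ℝ) : ℝ≥0∞ :=
  (∫⁻ x, g x ^ 2 * ENNReal.ofReal (w x)) ^ (1/2 : ℝ)

/-- The weak-`L²(w)` quasinorm of an `ℝ≥0∞`-valued function. -/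
def weakL2wE (g : ℝ → ℝ≥0∞) (w : ℝ → ℝ) : ℝ≥0∞ :=
  ⨆ (lam : ℝ) (_ : 0 < lam),
    ENNReal.ofReal lam * wMeas w {x | ENNReal.ofReal lam < g x} ^ (1/2 : ℝ)

/-- `‖𝒜*_S‖_{L²(w) → L^{2,∞}(w)}`. -/
def opNormStrongWeak (S : Set (ℝ × ℝ)) (w : ℝ → ℝ) : ℝ≥0∞ :=
  ⨆ (f : ℝ → ℝ) (_ : Measurable f) (_ : L2w f w ≤ 1), weakL2wE (sparseOpStar S f) w

/-- `‖𝒜*_S‖_{L²(w) → L²(w)}`. -/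
def opNormStrong (S : Set (ℝ × ℝ)) (w : ℝ → ℝ) : ℝ≥0∞ :=
  ⨆ (f : ℝ → ℝ) (_ : Measurable f) (_ : L2w f w ≤ 1), L2wE (sparseOpStar S f) w

/-- `‖M‖_{L²(w) → L^{2,∞}(w)}`. -/
def maxOpNormWeak (w : ℝ → ℝ) : ℝ≥0∞ :=
  ⨆ (f : ℝ → ℝ) (_ : Measurable f) (_ : L2w f w ≤ 1), weakL2wE (maxFn f) w

/-- The lacunary weight `σ` constructed from the integer `a ≥ 1` (with `α = 2^{-a}`):
an even function which, on `[2^{-(k+1)}, 2^{-k})` for integers `k ≥ 1`, equals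
`(2^{2k(1-α)}/α)·(x - 2^{-(k+1)})^{1-α}` on `[2^{-(k+1)}, (1+α)2^{-(k+1)})`,
`x^{α-1}` on `[(1+α)2^{-(k+1)}, (1-α)2^{-k})`,
`(2^{2k(1-α)}/α)·(2^{-k} - x)^{1-α}` on `[(1-α)2^{-k}, 2^{-k})`,
and which equals `x^{α-1}` for `x ≥ 1/2`. -/
def lacWeight (a : ℕ) : ℝ → ℝ := fun x =>
  let α : ℝ := (2 : ℝ) ^ (-(a : ℤ))
  let y := |x|
  if y = 0 then 1
  else if (1 / 2 : ℝ) ≤ y then y ^ (α - 1)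
  else
    let k : ℤ := ⌈-Real.logb 2 y⌉ - 1
    if y < (1 + α) * (2 : ℝ) ^ (-(k + 1)) then
      (2 : ℝ) ^ (2 * (k : ℝ) * (1 - α)) / α * (y - (2 : ℝ) ^ (-(k + 1))) ^ (1 - α)
    else if y < (1 - α) * (2 : ℝ) ^ (-k) then y ^ (α - 1)
    else (2 : ℝ) ^ (2 * (k : ℝ) * (1 - α)) / α * ((2 : ℝ) ^ (-k) - y) ^ (1 - α)

section Aux
open Real

lemma two_rpow_pos (t : ℝ) : 0 < (2:ℝ) ^ t := Real.rpow_pos_of_pos two_pos t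

lemma two_rpow_mono {s t : ℝ} (h : s ≤ t) : (2:ℝ) ^ s ≤ (2:ℝ) ^ t :=
  Real.rpow_le_rpow_of_exponent_le one_le_two h

lemma two_rpow_add (s t : ℝ) : (2:ℝ) ^ (s + t) = 2 ^ s * 2 ^ t := Real.rpow_add two_pos s t

lemma two_rpow_rpow (s t : ℝ) : ((2:ℝ) ^ s) ^ (t:ℝ) = 2 ^ (s * t) :=
  (Real.rpow_mul two_pos.le s t).symm

lemma two_rpow_mul_rpow (s t u : ℝ) : ((2:ℝ) ^ s * 2 ^ t) ^ (u:ℝ) = 2 ^ ((s + t) * u) := by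
  rw [← two_rpow_add, two_rpow_rpow]

lemma two_rpow_div (s t : ℝ) : (2:ℝ) ^ s / 2 ^ t = 2 ^ (s - t) := by
  rw [sub_eq_add_neg, two_rpow_add, Real.rpow_neg two_pos.le, div_eq_mul_inv]

lemma two_zpow_rpow (n : ℤ) : (2:ℝ) ^ n = (2:ℝ) ^ ((n:ℤ):ℝ) := (Real.rpow_intCast 2 n).symm

lemma two_rpow_congr {s t : ℝ} (h : s = t) : (2:ℝ) ^ s = (2:ℝ) ^ t := by rw [h]

section RealIneq

set_option linter.unusedSectionVars false

variable {aR jR α : ℝ} (hα0 : 0 < α) (hα8 : α ≤ 1/8) (haα : aR * α ≤ 1)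
  (ha3 : 3 ≤ aR) (hj1 : 1 ≤ jR) (hαe : α = (2:ℝ) ^ (-aR))

include hα0 hα8 haα ha3 hj1 hαe

lemma R1 : (2:ℝ) ^ (2*jR*(1-α)) / α * (α * 2^(-jR-1)) ^ (1-α) * (α * 2^(-jR-1)) ≤
    (1/2) * (2:ℝ) ^ (-jR*α) := by
  have hα_pow : α ^ (1-α) = (2:ℝ) ^ (-aR * (1-α)) := by rw [hαe, two_rpow_rpow]
  have hα_inv : α⁻¹ = (2:ℝ) ^ aR := by rw [hαe, ← Real.rpow_neg two_pos.le, neg_neg]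
  have hh_pow : ((2:ℝ)^(-jR-1)) ^ (1-α) = (2:ℝ) ^ ((-jR-1)*(1-α)) := two_rpow_rpow _ _
  calc (2:ℝ) ^ (2*jR*(1-α)) / α * (α * 2^(-jR-1)) ^ (1-α) * (α * 2^(-jR-1))
      = (2:ℝ) ^ (2*jR*(1-α) + aR + (-aR*(1-α) + (-jR-1)*(1-α)) + (-aR + (-jR-1))) := by
        rw [Real.mul_rpow hα0.le (two_rpow_pos _).le, hα_pow, hh_pow, div_eq_mul_inv, hα_inv,
          hαe]
        simp only [← two_rpow_add]
    _ ≤ (2:ℝ) ^ (-1 + -jR*α) := two_rpow_mono (by nlinarith)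
    _ = (1/2) * (2:ℝ) ^ (-jR*α) := by
        rw [two_rpow_add]
        norm_num [show ((-1:ℝ) = ((-1:ℤ):ℝ)) by norm_num, Real.rpow_intCast]

lemma R3 : (2:ℝ) ^ (2*jR*(1-α)) / α * (α * 2^(-jR)) ^ (1-α) * (α * 2^(-jR)) ≤
    (1/2) * (2:ℝ) ^ (-jR*α) := by
  have hα_pow : α ^ (1-α) = (2:ℝ) ^ (-aR * (1-α)) := by rw [hαe, two_rpow_rpow]
  have hα_inv : α⁻¹ = (2:ℝ) ^ aR := by rw [hαe, ← Real.rpow_neg two_pos.le, neg_neg]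
  have hh_pow : ((2:ℝ)^(-jR)) ^ (1-α) = (2:ℝ) ^ ((-jR)*(1-α)) := two_rpow_rpow _ _
  calc (2:ℝ) ^ (2*jR*(1-α)) / α * (α * 2^(-jR)) ^ (1-α) * (α * 2^(-jR))
      = (2:ℝ) ^ (2*jR*(1-α) + aR + (-aR*(1-α) + (-jR)*(1-α)) + (-aR + (-jR))) := by
        rw [Real.mul_rpow hα0.le (two_rpow_pos _).le, hα_pow, hh_pow, div_eq_mul_inv, hα_inv,
          hαe]
        simp only [← two_rpow_add]
    _ ≤ (2:ℝ) ^ (-1 + -jR*α) := two_rpow_mono (by nlinarith)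
    _ = (1/2) * (2:ℝ) ^ (-jR*α) := by
        rw [two_rpow_add]
        norm_num [show ((-1:ℝ) = ((-1:ℤ):ℝ)) by norm_num, Real.rpow_intCast]

lemma R2 : (2:ℝ) ^ ((-jR-1)*(α-1)) * (2:ℝ) ^ (-jR-1) ≤ (2:ℝ) ^ (-jR*α) := by
  rw [← two_rpow_add]
  exact two_rpow_mono (by nlinarith)

lemma R4 : (α * (2:ℝ) ^ (-(2*jR*(1-α)))) * ((α * 2^(-jR-1)) ^ α / α) ≤
    (2:ℝ) ^ (-jR*(2-α)) := by
  have hα_pow : α ^ α = (2:ℝ) ^ (-aR * α) := by rw [hαe, two_rpow_rpow]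
  have hα_inv : α⁻¹ = (2:ℝ) ^ aR := by rw [hαe, ← Real.rpow_neg two_pos.le, neg_neg]
  have hh_pow : ((2:ℝ)^(-jR-1)) ^ α = (2:ℝ) ^ ((-jR-1)*α) := two_rpow_rpow _ _
  calc (α * (2:ℝ) ^ (-(2*jR*(1-α)))) * ((α * 2^(-jR-1)) ^ α / α)
      = (2:ℝ) ^ ((-aR + -(2*jR*(1-α))) + ((-aR*α + (-jR-1)*α) + aR)) := by
        rw [Real.mul_rpow hα0.le (two_rpow_pos _).le, hα_pow, hh_pow, div_eq_mul_inv, hα_inv,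
          hαe]
        simp only [← two_rpow_add]
    _ ≤ (2:ℝ) ^ (-jR*(2-α)) := two_rpow_mono (by nlinarith)

lemma R6 : (α * (2:ℝ) ^ (-(2*jR*(1-α)))) * ((α * 2^(-jR)) ^ α / α) ≤
    (2:ℝ) ^ (-jR*(2-α)) := by
  have hα_pow : α ^ α = (2:ℝ) ^ (-aR * α) := by rw [hαe, two_rpow_rpow]
  have hα_inv : α⁻¹ = (2:ℝ) ^ aR := by rw [hαe, ← Real.rpow_neg two_pos.le, neg_neg]
  have hh_pow : ((2:ℝ)^(-jR)) ^ α = (2:ℝ) ^ ((-jR)*α) := two_rpow_rpow _ _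
  calc (α * (2:ℝ) ^ (-(2*jR*(1-α)))) * ((α * 2^(-jR)) ^ α / α)
      = (2:ℝ) ^ ((-aR + -(2*jR*(1-α))) + ((-aR*α + (-jR)*α) + aR)) := by
        rw [Real.mul_rpow hα0.le (two_rpow_pos _).le, hα_pow, hh_pow, div_eq_mul_inv, hα_inv,
          hαe]
        simp only [← two_rpow_add]
    _ ≤ (2:ℝ) ^ (-jR*(2-α)) := two_rpow_mono (by nlinarith)

lemma R5 : (2:ℝ) ^ (-jR*(1-α)) * (2:ℝ) ^ (-jR-1) ≤ (2:ℝ) ^ (-jR*(2-α)) := by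
  rw [← two_rpow_add]
  exact two_rpow_mono (by nlinarith)

lemma R7 : (2:ℝ) ^ (-jR*(2-α)) / 8 ≤ (2:ℝ) ^ ((-jR-1)*(1-α)) * ((2:ℝ) ^ (-jR-1) / 2) := by
  have e1 : (2:ℝ) ^ ((-jR-1)*(1-α)) * ((2:ℝ) ^ (-jR-1) / 2) =
      (2:ℝ) ^ ((-jR-1)*(1-α) + ((-jR-1) + (-1))) := by
    rw [show ((2:ℝ) ^ (-jR-1) / 2) = (2:ℝ) ^ (-jR-1) * (2:ℝ)^(-1:ℝ) by
      norm_num [show ((-1:ℝ) = ((-1:ℤ):ℝ)) by norm_num, Real.rpow_intCast]; ring]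
    simp only [← two_rpow_add]
  have e2 : (2:ℝ) ^ (-jR*(2-α)) / 8 = (2:ℝ) ^ (-jR*(2-α) + (-3)) := by
    rw [two_rpow_add]
    norm_num [show ((-3:ℝ) = ((-3:ℤ):ℝ)) by norm_num, Real.rpow_intCast]
    ring
  rw [e1, e2]
  exact two_rpow_mono (by nlinarith)

lemma R8 : (2:ℝ) ^ (-jR*α) / 4 ≤ (2:ℝ) ^ (-jR*(α-1)) * ((2:ℝ) ^ (-jR-1) / 2) := by
  have e1 : (2:ℝ) ^ (-jR*(α-1)) * ((2:ℝ) ^ (-jR-1) / 2) =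
      (2:ℝ) ^ (-jR*(α-1) + ((-jR-1) + (-1))) := by
    rw [show ((2:ℝ) ^ (-jR-1) / 2) = (2:ℝ) ^ (-jR-1) * (2:ℝ)^(-1:ℝ) by
      norm_num [show ((-1:ℝ) = ((-1:ℤ):ℝ)) by norm_num, Real.rpow_intCast]; ring]
    simp only [← two_rpow_add]
  have e2 : (2:ℝ) ^ (-jR*α) / 4 = (2:ℝ) ^ (-jR*α + (-2)) := by
    rw [two_rpow_add]
    norm_num [show ((-2:ℝ) = ((-2:ℤ):ℝ)) by norm_num, Real.rpow_intCast]
    ring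
  rw [e1, e2]
  exact two_rpow_mono (by nlinarith)

end RealIneq
lemma spike_lintegral (h l p c : ℝ) (hl : 0 < l) (hp : 0 < p) (hc : 0 ≤ c) :
    ∫⁻ x in Ioo h (h + l), ENNReal.ofReal (c * (x - h) ^ (p - 1)) =
      ENNReal.ofReal (c * (l ^ p / p)) := by
  have hint : IntervalIntegrable (fun x : ℝ => c * (x - h) ^ (p - 1)) volume h (h + l) := by
    have := (intervalIntegral.intervalIntegrable_rpow' (a := 0) (b := l)
      (r := p - 1) (by linarith)).comp_sub_right h
    simpa [add_comm] using this.const_mul c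
  have hIoo : IntegrableOn (fun x : ℝ => c * (x - h) ^ (p - 1)) (Ioo h (h + l)) volume := by
    exact hint.1.mono_set Ioo_subset_Ioc_self
  rw [← ofReal_integral_eq_lintegral_ofReal hIoo]
  · congr 1
    have e1 : ∫ x in Ioo h (h + l), c * (x - h) ^ (p - 1) =
        ∫ x in h..(h + l), c * (x - h) ^ (p - 1) := by
      rw [intervalIntegral.integral_of_le (by linarith), ← integral_Ioc_eq_integral_Ioo]
    rw [e1]
    have e2 : (∫ x in h..(h + l), c * (x - h) ^ (p - 1)) =
        ∫ x in (h - h)..(h + l - h), c * x ^ (p - 1) :=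
      intervalIntegral.integral_comp_sub_right (fun x => c * x ^ (p - 1)) h
    rw [e2]
    simp only [sub_self, add_sub_cancel_left]
    rw [intervalIntegral.integral_const_mul, integral_rpow (Or.inl (by linarith))]
    rw [sub_add_cancel, Real.zero_rpow hp.ne', sub_zero]
  · filter_upwards [self_mem_ae_restrict measurableSet_Ioo] with x hx
    have : (0:ℝ) ≤ (x - h) ^ (p - 1) := Real.rpow_nonneg (by linarith [hx.1]) _
    positivity

lemma spike_lintegral' (H l p c : ℝ) (hl : 0 < l) (hp : 0 < p) (hc : 0 ≤ c) :
    ∫⁻ x in Ioo (H - l) H, ENNReal.ofReal (c * (H - x) ^ (p - 1)) =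
      ENNReal.ofReal (c * (l ^ p / p)) := by
  have hint : IntervalIntegrable (fun x : ℝ => c * (H - x) ^ (p - 1)) volume (H - l) H := by
    have := (intervalIntegral.intervalIntegrable_rpow' (a := 0) (b := l)
      (r := p - 1) (by linarith)).comp_sub_left H
    have h2 := this.const_mul c
    simpa [sub_zero] using h2.symm
  have hIoo : IntegrableOn (fun x : ℝ => c * (H - x) ^ (p - 1)) (Ioo (H - l) H) volume :=
    hint.1.mono_set Ioo_subset_Ioc_self
  rw [← ofReal_integral_eq_lintegral_ofReal hIoo]
  · congr 1
    have e1 : ∫ x in Ioo (H - l) H, c * (H - x) ^ (p - 1) =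
        ∫ x in (H - l)..H, c * (H - x) ^ (p - 1) := by
      rw [intervalIntegral.integral_of_le (by linarith), ← integral_Ioc_eq_integral_Ioo]
    have e2 : (∫ x in (H - l)..H, c * (H - x) ^ (p - 1)) =
        ∫ x in (H - H)..(H - (H - l)), c * x ^ (p - 1) :=
      intervalIntegral.integral_comp_sub_left (fun x => c * x ^ (p - 1)) H
    rw [e1, e2]
    simp only [sub_self, sub_sub_cancel]
    rw [intervalIntegral.integral_const_mul, integral_rpow (Or.inl (by linarith))]
    rw [sub_add_cancel, Real.zero_rpow hp.ne', sub_zero]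
  · filter_upwards [self_mem_ae_restrict measurableSet_Ioo] with x hx
    have : (0:ℝ) ≤ (H - x) ^ (p - 1) := Real.rpow_nonneg (by linarith [hx.2]) _
    positivity
lemma logb_two_zpow (n : ℤ) : Real.logb 2 ((2:ℝ) ^ n) = n := by
  have h2 := Real.log_pos one_lt_two
  rw [Real.logb, Real.log_zpow]
  field_simp

lemma lacWeight_on (a j : ℕ) (hj : 1 ≤ j) {x : ℝ}
    (hx1 : (2:ℝ) ^ (-(j:ℤ) - 1) ≤ x) (hx2 : x < (2:ℝ) ^ (-(j:ℤ))) :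
    lacWeight a x =
      if x < (1 + (2:ℝ) ^ (-(a:ℤ))) * (2:ℝ) ^ (-(j:ℤ) - 1) then
        (2:ℝ) ^ (2 * (j:ℝ) * (1 - (2:ℝ) ^ (-(a:ℤ)))) / (2:ℝ) ^ (-(a:ℤ)) *
          (x - (2:ℝ) ^ (-(j:ℤ) - 1)) ^ (1 - (2:ℝ) ^ (-(a:ℤ)))
      else if x < (1 - (2:ℝ) ^ (-(a:ℤ))) * (2:ℝ) ^ (-(j:ℤ)) then
        x ^ ((2:ℝ) ^ (-(a:ℤ)) - 1)
      else
        (2:ℝ) ^ (2 * (j:ℝ) * (1 - (2:ℝ) ^ (-(a:ℤ)))) / (2:ℝ) ^ (-(a:ℤ)) *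
          ((2:ℝ) ^ (-(j:ℤ)) - x) ^ (1 - (2:ℝ) ^ (-(a:ℤ))) := by
  have hx0 : 0 < x := lt_of_lt_of_le (zpow_pos two_pos _) hx1
  have hxabs : |x| = x := abs_of_pos hx0
  have hxhalf : ¬ ((1/2 : ℝ) ≤ x) := by
    have : (2:ℝ) ^ (-(j:ℤ)) ≤ (2:ℝ) ^ (-1 : ℤ) := by
      apply zpow_le_zpow_right₀ one_le_two
      omega
    push_neg
    calc x < (2:ℝ) ^ (-(j:ℤ)) := hx2
    _ ≤ (2:ℝ) ^ (-1 : ℤ) := this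
    _ = 1/2 := by norm_num
  have hceil : ⌈-Real.logb 2 x⌉ = (j:ℤ) + 1 := by
    rw [Int.ceil_eq_iff]
    constructor
    · push_cast
      have : Real.logb 2 x < Real.logb 2 ((2:ℝ) ^ (-(j:ℤ))) :=
        Real.logb_lt_logb one_lt_two hx0 hx2
      rw [logb_two_zpow] at this
      push_cast at this
      linarith
    · push_cast
      have : Real.logb 2 ((2:ℝ) ^ (-(j:ℤ) - 1)) ≤ Real.logb 2 x := by
        rw [Real.logb_le_logb one_lt_two (zpow_pos two_pos _) hx0]
        exact hx1
      rw [logb_two_zpow] at this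
      push_cast at this
      linarith
  show (if |x| = 0 then _ else _) = _
  rw [hxabs, if_neg hx0.ne', if_neg hxhalf]
  have hk : ⌈-Real.logb 2 x⌉ - 1 = (j:ℤ) := by omega
  rw [hk]
  norm_num [show (-1 + -(j:ℤ)) = -(j:ℤ) - 1 by ring]

lemma piece_upper {u v B C : ℝ} (hB : 0 ≤ B) {f : ℝ → ℝ}
    (hf : ∀ x ∈ Ico u v, f x ≤ B) (hC : B * (v - u) ≤ C) :
    ∫⁻ x in Ico u v, ENNReal.ofReal (f x) ≤ ENNReal.ofReal C := by
  calc ∫⁻ x in Ico u v, ENNReal.ofReal (f x)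
      ≤ ∫⁻ _x in Ico u v, ENNReal.ofReal B :=
        setLIntegral_mono' measurableSet_Ico (fun x hx => ENNReal.ofReal_le_ofReal (hf x hx))
    _ = ENNReal.ofReal B * volume (Ico u v) := setLIntegral_const _ _
    _ = ENNReal.ofReal (B * (v - u)) := by
        rw [Real.volume_Ico, ← ENNReal.ofReal_mul hB]
    _ ≤ ENNReal.ofReal C := ENNReal.ofReal_le_ofReal hC

lemma piece_lower {u v B C : ℝ} (hB : 0 ≤ B) {f : ℝ → ℝ}
    (hf : ∀ x ∈ Ico u v, B ≤ f x) (hC : C ≤ B * (v - u)) :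
    ENNReal.ofReal C ≤ ∫⁻ x in Ico u v, ENNReal.ofReal (f x) := by
  calc ENNReal.ofReal C ≤ ENNReal.ofReal (B * (v - u)) := ENNReal.ofReal_le_ofReal hC
    _ = ENNReal.ofReal B * volume (Ico u v) := by rw [Real.volume_Ico, ENNReal.ofReal_mul hB]
    _ = ∫⁻ _x in Ico u v, ENNReal.ofReal B := (setLIntegral_const _ _).symm
    _ ≤ ∫⁻ x in Ico u v, ENNReal.ofReal (f x) :=
        setLIntegral_mono' measurableSet_Ico (fun x hx => ENNReal.ofReal_le_ofReal (hf x hx))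

lemma interval_bounds (a j : ℕ) (ha : 3 ≤ a) (hj : 1 ≤ j) :
    (ENNReal.ofReal ((2:ℝ) ^ (-(j:ℝ) * (2 - (2:ℝ) ^ (-(a:ℤ)))) / 8) ≤
        ∫⁻ x in Ico ((2:ℝ) ^ (-(j:ℤ) - 1)) ((2:ℝ) ^ (-(j:ℤ))),
          ENNReal.ofReal ((lacWeight a x)⁻¹)) ∧
    ((∫⁻ x in Ico ((2:ℝ) ^ (-(j:ℤ) - 1)) ((2:ℝ) ^ (-(j:ℤ))),
          ENNReal.ofReal ((lacWeight a x)⁻¹)) ≤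
        ENNReal.ofReal (3 * (2:ℝ) ^ (-(j:ℝ) * (2 - (2:ℝ) ^ (-(a:ℤ)))))) ∧
    (ENNReal.ofReal ((2:ℝ) ^ (-(j:ℝ) * (2:ℝ) ^ (-(a:ℤ))) / 4) ≤
        ∫⁻ x in Ico ((2:ℝ) ^ (-(j:ℤ) - 1)) ((2:ℝ) ^ (-(j:ℤ))),
          ENNReal.ofReal (lacWeight a x)) ∧
    ((∫⁻ x in Ico ((2:ℝ) ^ (-(j:ℤ) - 1)) ((2:ℝ) ^ (-(j:ℤ))),
          ENNReal.ofReal (lacWeight a x)) ≤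
        ENNReal.ofReal (2 * (2:ℝ) ^ (-(j:ℝ) * (2:ℝ) ^ (-(a:ℤ))))) := by
  have ha3 : (3:ℝ) ≤ (a:ℝ) := by exact_mod_cast ha
  have hj1 : (1:ℝ) ≤ (j:ℝ) := by exact_mod_cast hj
  -- the piecewise formula, before abstraction
  have formula : ∀ x, (2:ℝ) ^ (-(j:ℤ) - 1) ≤ x → x < (2:ℝ) ^ (-(j:ℤ)) →
      lacWeight a x =
      if x < (1 + (2:ℝ) ^ (-(a:ℤ))) * (2:ℝ) ^ (-(j:ℤ) - 1) then
        (2:ℝ) ^ (2 * (j:ℝ) * (1 - (2:ℝ) ^ (-(a:ℤ)))) / (2:ℝ) ^ (-(a:ℤ)) *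
          (x - (2:ℝ) ^ (-(j:ℤ) - 1)) ^ (1 - (2:ℝ) ^ (-(a:ℤ)))
      else if x < (1 - (2:ℝ) ^ (-(a:ℤ))) * (2:ℝ) ^ (-(j:ℤ)) then
        x ^ ((2:ℝ) ^ (-(a:ℤ)) - 1)
      else
        (2:ℝ) ^ (2 * (j:ℝ) * (1 - (2:ℝ) ^ (-(a:ℤ)))) / (2:ℝ) ^ (-(a:ℤ)) *
          ((2:ℝ) ^ (-(j:ℤ)) - x) ^ (1 - (2:ℝ) ^ (-(a:ℤ))) :=
    fun x hx1 hx2 => lacWeight_on a j hj hx1 hx2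
  have hαe0 : (2:ℝ) ^ (-(a:ℤ)) = (2:ℝ) ^ (-(a:ℝ)) := by
    rw [two_zpow_rpow]; push_cast; ring_nf
  have hre0 : (2:ℝ) ^ (-(j:ℤ) - 1) = (2:ℝ) ^ (-(j:ℝ) - 1) := by
    rw [two_zpow_rpow]; push_cast; ring_nf
  have Hre0 : (2:ℝ) ^ (-(j:ℤ)) = (2:ℝ) ^ (-(j:ℝ)) := by
    rw [two_zpow_rpow]; push_cast; ring_nf
  set α : ℝ := (2:ℝ) ^ (-(a:ℤ)) with hαdef
  set h : ℝ := (2:ℝ) ^ (-(j:ℤ) - 1) with hhdef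
  set H : ℝ := (2:ℝ) ^ (-(j:ℤ)) with hHdef
  clear_value α h H
  rename' hαe0 => hαe, hre0 => hre, Hre0 => Hre
  have hα0 : 0 < α := hαe ▸ two_rpow_pos _
  have hα8 : α ≤ 1/8 := by
    have h1 : (2:ℝ) ^ (-(a:ℝ)) ≤ (2:ℝ) ^ (-3:ℝ) := two_rpow_mono (by linarith)
    have h8 : (2:ℝ) ^ (-3:ℝ) = 1/8 := by
      rw [show (-3:ℝ) = ((-3:ℤ):ℝ) by norm_num, Real.rpow_intCast]; norm_num
    rw [hαe]; rw [h8] at h1; exact h1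
  have haα : (a:ℝ) * α ≤ 1 := by
    have h1 : (a:ℝ) ≤ (2:ℝ) ^ (a:ℝ) := by
      calc (a:ℝ) ≤ ((2^a : ℕ):ℝ) := by exact_mod_cast (Nat.lt_two_pow_self (n := a)).le
      _ = (2:ℝ) ^ (a:ℝ) := by push_cast; rw [← Real.rpow_natCast]
    have h3 : (2:ℝ) ^ (-(a:ℝ)) = ((2:ℝ) ^ (a:ℝ))⁻¹ := Real.rpow_neg two_pos.le _
    rw [hαe, h3, mul_inv_le_iff₀ (two_rpow_pos _)]
    simpa using h1
  have hh0 : 0 < h := hre ▸ two_rpow_pos _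
  have hH0 : 0 < H := Hre ▸ two_rpow_pos _
  have hHh : H = 2 * h := by
    have e := two_rpow_add 1 (-(j:ℝ) - 1)
    rw [Real.rpow_one] at e
    rw [hre, Hre, ← e]
    exact two_rpow_congr (by ring)
  set m1 : ℝ := (1 + α) * h with hm1def
  set m2 : ℝ := (1 - α) * H with hm2def
  set D : ℝ := (2:ℝ) ^ (2 * (j:ℝ) * (1 - α)) / α with hDdef
  clear_value m1 m2 D
  have hD0 : 0 < D := by rw [hDdef]; exact div_pos (two_rpow_pos _) hα0
  have hDinv : D⁻¹ = α * (2:ℝ) ^ (-(2 * (j:ℝ) * (1 - α))) := by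
    rw [hDdef, inv_div, div_eq_mul_inv, ← Real.rpow_neg two_pos.le]
  have h1 : h ≤ m1 := by nlinarith
  have h2 : m1 ≤ m2 := by nlinarith
  have h3 : m2 ≤ H := by nlinarith
  have hm1h : m1 - h = α * h := by rw [hm1def]; ring
  have hm1h' : m1 = h + α * h := by rw [hm1def]; ring
  have hm2H' : m2 = H - α * H := by rw [hm2def]; ring
  have hm2m1 : m2 - m1 = (1 - 3*α) * h := by rw [hm1def, hm2def, hHh]; ring
  have hlen1 : m2 - m1 ≤ h := by nlinarith
  have hlen2 : h/2 ≤ m2 - m1 := by nlinarith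
  have hh_pow : ∀ t : ℝ, h ^ t = ((2:ℝ) ^ (-(j:ℝ) - 1)) ^ t := fun t => by rw [hre]
  have fone : ∀ x ∈ Ico h m1, lacWeight a x = D * (x - h) ^ (1 - α) := by
    intro x hx
    rw [formula x hx.1 (lt_of_lt_of_le hx.2 (h2.trans h3)), if_pos hx.2]
  have ftwo : ∀ x ∈ Ico m1 m2, lacWeight a x = x ^ (α - 1) := by
    intro x hx
    rw [formula x (h1.trans hx.1) (lt_of_lt_of_le hx.2 h3), if_neg (not_lt.2 hx.1),
      if_pos hx.2]
  have fthree : ∀ x ∈ Ico m2 H, lacWeight a x = D * (H - x) ^ (1 - α) := by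
    intro x hx
    rw [formula x ((h1.trans h2).trans hx.1) hx.2, if_neg (not_lt.2 (h2.trans hx.1)),
      if_neg (not_lt.2 hx.1)]
  clear formula
  have split : ∀ F : ℝ → ℝ≥0∞, (∫⁻ x in Ico h H, F x) ≤
      (∫⁻ x in Ico h m1, F x) + ((∫⁻ x in Ico m1 m2, F x) + (∫⁻ x in Ico m2 H, F x)) := by
    intro F
    calc (∫⁻ x in Ico h H, F x) = ∫⁻ x in Ico h m1 ∪ Ico m1 H, F x := by
          rw [Ico_union_Ico_eq_Ico h1 (h2.trans h3)]
    _ ≤ (∫⁻ x in Ico h m1, F x) + ∫⁻ x in Ico m1 H, F x := lintegral_union_le _ _ _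
    _ ≤ _ := by
        refine add_le_add le_rfl ?_
        rw [← Ico_union_Ico_eq_Ico h2 h3]
        exact lintegral_union_le _ _ _
  constructor
  · -- W lower
    refine le_trans ?_ (lintegral_mono_set (fun x (hx : x ∈ Ico m1 m2) => ⟨h1.trans hx.1, lt_of_lt_of_le hx.2 h3⟩))
    apply piece_lower (Real.rpow_nonneg hh0.le (1 - α))
    · intro x hx
      rw [ftwo x hx, ← Real.rpow_neg (le_of_lt (lt_of_lt_of_le hh0 (h1.trans hx.1))), neg_sub]
      exact Real.rpow_le_rpow hh0.le (h1.trans hx.1) (by linarith)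
    · calc (2:ℝ) ^ (-(j:ℝ) * (2 - α)) / 8 ≤ (2:ℝ) ^ ((-(j:ℝ)-1)*(1-α)) * ((2:ℝ) ^ (-(j:ℝ)-1) / 2) :=
            R7 hα0 hα8 haα ha3 hj1 hαe
      _ = h ^ (1-α) * (h/2) := by rw [hh_pow, two_rpow_rpow, hre]
      _ ≤ h ^ (1-α) * (m2 - m1) := mul_le_mul_of_nonneg_left hlen2 (Real.rpow_nonneg hh0.le _)
  constructor
  · -- W upper
    refine le_trans (split _) ?_
    have wP1 : (∫⁻ x in Ico h m1, ENNReal.ofReal ((lacWeight a x)⁻¹)) ≤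
        ENNReal.ofReal ((2:ℝ) ^ (-(j:ℝ) * (2 - α))) := by
      have c0 : 0 ≤ α * (2:ℝ) ^ (-(2 * (j:ℝ) * (1 - α))) := by positivity
      have ptw : ∀ x ∈ Ico h m1, (lacWeight a x)⁻¹ =
          (α * (2:ℝ) ^ (-(2 * (j:ℝ) * (1 - α)))) * (x - h) ^ (α - 1) := by
        intro x hx
        rw [fone x hx, mul_inv, hDinv, ← Real.rpow_neg (sub_nonneg.2 hx.1), neg_sub]
      calc (∫⁻ x in Ico h m1, ENNReal.ofReal ((lacWeight a x)⁻¹))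
          = ∫⁻ x in Ico h m1, ENNReal.ofReal
              ((α * (2:ℝ) ^ (-(2 * (j:ℝ) * (1 - α)))) * (x - h) ^ (α - 1)) :=
            setLIntegral_congr_fun measurableSet_Ico (fun x hx => congrArg ENNReal.ofReal (ptw x hx))
        _ = ∫⁻ x in Ioo h m1, ENNReal.ofReal
              ((α * (2:ℝ) ^ (-(2 * (j:ℝ) * (1 - α)))) * (x - h) ^ (α - 1)) :=
            (setLIntegral_congr Ioo_ae_eq_Ico).symm
        _ = ENNReal.ofReal ((α * (2:ℝ) ^ (-(2 * (j:ℝ) * (1 - α)))) * ((α * h) ^ α / α)) := by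
            rw [show m1 = h + α * h from hm1h']
            exact spike_lintegral h (α * h) α _ (by positivity) hα0 c0
        _ ≤ ENNReal.ofReal ((2:ℝ) ^ (-(j:ℝ) * (2 - α))) := by
            apply ENNReal.ofReal_le_ofReal
            rw [hre]
            exact R4 hα0 hα8 haα ha3 hj1 hαe
    have wP2 : (∫⁻ x in Ico m1 m2, ENNReal.ofReal ((lacWeight a x)⁻¹)) ≤
        ENNReal.ofReal ((2:ℝ) ^ (-(j:ℝ) * (2 - α))) := by
      apply piece_upper (Real.rpow_nonneg hH0.le (1 - α))
      · intro x hx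
        rw [ftwo x hx, ← Real.rpow_neg (le_of_lt (lt_of_lt_of_le hh0 (h1.trans hx.1))), neg_sub]
        exact Real.rpow_le_rpow (le_of_lt (lt_of_lt_of_le hh0 (h1.trans hx.1)))
          (le_trans hx.2.le h3) (by linarith)
      · calc H ^ (1-α) * (m2 - m1) ≤ H ^ (1-α) * h :=
              mul_le_mul_of_nonneg_left hlen1 (Real.rpow_nonneg hH0.le _)
        _ = (2:ℝ) ^ (-(j:ℝ)*(1-α)) * (2:ℝ) ^ (-(j:ℝ)-1) := by
            rw [Hre, two_rpow_rpow, hre]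
        _ ≤ (2:ℝ) ^ (-(j:ℝ) * (2 - α)) := R5 hα0 hα8 haα ha3 hj1 hαe
    have wP3 : (∫⁻ x in Ico m2 H, ENNReal.ofReal ((lacWeight a x)⁻¹)) ≤
        ENNReal.ofReal ((2:ℝ) ^ (-(j:ℝ) * (2 - α))) := by
      have c0 : 0 ≤ α * (2:ℝ) ^ (-(2 * (j:ℝ) * (1 - α))) := by positivity
      have ptw : ∀ x ∈ Ico m2 H, (lacWeight a x)⁻¹ =
          (α * (2:ℝ) ^ (-(2 * (j:ℝ) * (1 - α)))) * (H - x) ^ (α - 1) := by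
        intro x hx
        rw [fthree x hx, mul_inv, hDinv, ← Real.rpow_neg (sub_nonneg.2 hx.2.le), neg_sub]
      calc (∫⁻ x in Ico m2 H, ENNReal.ofReal ((lacWeight a x)⁻¹))
          = ∫⁻ x in Ico m2 H, ENNReal.ofReal
              ((α * (2:ℝ) ^ (-(2 * (j:ℝ) * (1 - α)))) * (H - x) ^ (α - 1)) :=
            setLIntegral_congr_fun measurableSet_Ico (fun x hx => congrArg ENNReal.ofReal (ptw x hx))
        _ = ∫⁻ x in Ioo m2 H, ENNReal.ofReal
              ((α * (2:ℝ) ^ (-(2 * (j:ℝ) * (1 - α)))) * (H - x) ^ (α - 1)) :=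
            (setLIntegral_congr Ioo_ae_eq_Ico).symm
        _ = ENNReal.ofReal ((α * (2:ℝ) ^ (-(2 * (j:ℝ) * (1 - α)))) * ((α * H) ^ α / α)) := by
            rw [show m2 = H - α * H from hm2H']
            exact spike_lintegral' H (α * H) α _ (by positivity) hα0 c0
        _ ≤ ENNReal.ofReal ((2:ℝ) ^ (-(j:ℝ) * (2 - α))) := by
            apply ENNReal.ofReal_le_ofReal
            rw [Hre]
            exact R6 hα0 hα8 haα ha3 hj1 hαe
    calc (∫⁻ x in Ico h m1, ENNReal.ofReal ((lacWeight a x)⁻¹)) +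
          ((∫⁻ x in Ico m1 m2, ENNReal.ofReal ((lacWeight a x)⁻¹)) +
            (∫⁻ x in Ico m2 H, ENNReal.ofReal ((lacWeight a x)⁻¹)))
        ≤ ENNReal.ofReal ((2:ℝ) ^ (-(j:ℝ) * (2 - α))) +
          (ENNReal.ofReal ((2:ℝ) ^ (-(j:ℝ) * (2 - α))) +
            ENNReal.ofReal ((2:ℝ) ^ (-(j:ℝ) * (2 - α)))) :=
          add_le_add wP1 (add_le_add wP2 wP3)
      _ = ENNReal.ofReal (3 * (2:ℝ) ^ (-(j:ℝ) * (2 - α))) := by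
          rw [← ENNReal.ofReal_add (by positivity) (by positivity),
            ← ENNReal.ofReal_add (by positivity) (by positivity)]
          congr 1
          ring
  constructor
  · -- S lower
    refine le_trans ?_ (lintegral_mono_set (fun x (hx : x ∈ Ico m1 m2) => ⟨h1.trans hx.1, lt_of_lt_of_le hx.2 h3⟩))
    apply piece_lower (Real.rpow_nonneg hH0.le (α - 1))
    · intro x hx
      rw [ftwo x hx]
      exact Real.rpow_le_rpow_of_nonpos (lt_of_lt_of_le hh0 (h1.trans hx.1))
        (le_trans hx.2.le h3) (by linarith)
    · calc (2:ℝ) ^ (-(j:ℝ) * α) / 4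
          ≤ (2:ℝ) ^ (-(j:ℝ)*(α-1)) * ((2:ℝ) ^ (-(j:ℝ)-1) / 2) := R8 hα0 hα8 haα ha3 hj1 hαe
      _ = H ^ (α-1) * (h/2) := by rw [Hre, two_rpow_rpow, hre]
      _ ≤ H ^ (α-1) * (m2 - m1) := mul_le_mul_of_nonneg_left hlen2 (Real.rpow_nonneg hH0.le _)
  · -- S upper
    refine le_trans (split _) ?_
    have sP1 : (∫⁻ x in Ico h m1, ENNReal.ofReal (lacWeight a x)) ≤
        ENNReal.ofReal ((1/2) * (2:ℝ) ^ (-(j:ℝ) * α)) := by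
      refine piece_upper (B := D * (α * h) ^ (1 - α)) (by positivity) ?_ ?_
      · intro x hx
        rw [fone x hx]
        exact mul_le_mul_of_nonneg_left
          (Real.rpow_le_rpow (sub_nonneg.2 hx.1)
            (by have := hx.2; linarith [hm1h']) (by linarith)) hD0.le
      · rw [hm1h, hDdef, hre]
        exact R1 hα0 hα8 haα ha3 hj1 hαe
    have sP2 : (∫⁻ x in Ico m1 m2, ENNReal.ofReal (lacWeight a x)) ≤
        ENNReal.ofReal ((2:ℝ) ^ (-(j:ℝ) * α)) := by
      apply piece_upper (Real.rpow_nonneg hh0.le (α - 1))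
      · intro x hx
        rw [ftwo x hx]
        exact Real.rpow_le_rpow_of_nonpos hh0 (h1.trans hx.1) (by linarith)
      · calc h ^ (α-1) * (m2 - m1) ≤ h ^ (α-1) * h :=
              mul_le_mul_of_nonneg_left hlen1 (Real.rpow_nonneg hh0.le _)
        _ = (2:ℝ) ^ ((-(j:ℝ)-1)*(α-1)) * (2:ℝ) ^ (-(j:ℝ)-1) := by
            rw [hre, two_rpow_rpow]
        _ ≤ (2:ℝ) ^ (-(j:ℝ) * α) := R2 hα0 hα8 haα ha3 hj1 hαe
    have sP3 : (∫⁻ x in Ico m2 H, ENNReal.ofReal (lacWeight a x)) ≤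
        ENNReal.ofReal ((1/2) * (2:ℝ) ^ (-(j:ℝ) * α)) := by
      refine piece_upper (u := m2) (v := H)
        (B := D * (α * H) ^ (1 - α)) (by positivity) ?_ ?_
      · intro x hx
        rw [fthree x hx]
        exact mul_le_mul_of_nonneg_left
          (Real.rpow_le_rpow (sub_nonneg.2 hx.2.le)
            (by have := hx.1; linarith [hm2H']) (by linarith)) hD0.le
      · rw [show H - m2 = α * H by rw [hm2H']; ring, hDdef, Hre]
        exact R3 hα0 hα8 haα ha3 hj1 hαe
    calc (∫⁻ x in Ico h m1, ENNReal.ofReal (lacWeight a x)) +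
          ((∫⁻ x in Ico m1 m2, ENNReal.ofReal (lacWeight a x)) +
            (∫⁻ x in Ico m2 H, ENNReal.ofReal (lacWeight a x)))
        ≤ ENNReal.ofReal ((1/2) * (2:ℝ) ^ (-(j:ℝ) * α)) +
          (ENNReal.ofReal ((2:ℝ) ^ (-(j:ℝ) * α)) +
            ENNReal.ofReal ((1/2) * (2:ℝ) ^ (-(j:ℝ) * α))) :=
          add_le_add sP1 (add_le_add sP2 sP3)
      _ = ENNReal.ofReal (2 * (2:ℝ) ^ (-(j:ℝ) * α)) := by
          rw [← ENNReal.ofReal_add (by positivity) (by positivity),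
            ← ENNReal.ofReal_add (by positivity) (by positivity)]
          congr 1
          ring

lemma inv_mono' {u v : ℝ} (hu : 0 < u) (huv : u ≤ v) : v⁻¹ ≤ u⁻¹ := by
  rw [inv_eq_one_div, inv_eq_one_div]
  gcongr


lemma one_sub_bounds {α : ℝ} (h0 : 0 < α) (h8 : α ≤ 1/8) :
    α/2 ≤ 1 - (2:ℝ) ^ (-α) ∧ 1 - (2:ℝ) ^ (-α) ≤ α := by
  have hlog1 : Real.log 2 ≤ 1 := by
    have := Real.log_le_sub_one_of_pos two_pos
    linarith
  have hlog2 : (0.6931471803 : ℝ) < Real.log 2 := Real.log_two_gt_d9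
  have hrd : (2:ℝ) ^ (-α) = Real.exp (Real.log 2 * (-α)) := Real.rpow_def_of_pos two_pos _
  set t : ℝ := α * Real.log 2 with ht
  have ht0 : 0 < t := mul_pos h0 (by linarith)
  have htα : t ≤ α := by nlinarith
  have hexp1 : 1 - t ≤ Real.exp (-t) := by
    have := Real.add_one_le_exp (-t)
    linarith
  have hexp2 : Real.exp (-t) ≤ (1+t)⁻¹ := by
    rw [Real.exp_neg]
    apply inv_mono' (by linarith)
    have := Real.add_one_le_exp t
    linarith
  have hmt : Real.log 2 * (-α) = -t := by rw [ht]; ring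
  constructor
  · rw [hrd, hmt]
    have h1t : (1+t)⁻¹ ≤ 1 - α/2 := by
      rw [← one_div, div_le_iff₀ (by linarith)]
      nlinarith
    linarith [hexp2.trans h1t]
  · rw [hrd, hmt]
    linarith

lemma tsum_ofReal_geom (L r : ℝ) (hL : 0 ≤ L) (hr0 : 0 ≤ r) (hr1 : r < 1) :
    ∑' n : ℕ, ENNReal.ofReal (L * r ^ n) =
      ENNReal.ofReal L * ENNReal.ofReal ((1 - r)⁻¹) := by
  have e : ∀ n : ℕ, ENNReal.ofReal (L * r ^ n) =
      ENNReal.ofReal L * (ENNReal.ofReal r) ^ n := fun n => by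
    rw [ENNReal.ofReal_mul hL, ENNReal.ofReal_pow hr0]
  simp_rw [e]
  rw [ENNReal.tsum_mul_left, ENNReal.tsum_geometric]
  congr 1
  have e2 : (1 : ℝ≥0∞) - ENNReal.ofReal r = ENNReal.ofReal (1 - r) := by
    rw [ENNReal.ofReal_sub _ hr0, ENNReal.ofReal_one]
  rw [e2, ← ENNReal.ofReal_inv_of_pos (by linarith)]

end Aux

/-- Integrals of the lacunary weights `w = (lacWeight a)⁻¹` and `σ = lacWeight a` over
`[0, 2^{-k}]`: `∫_0^{2^{-k}} w ≍ 2^{-k(2-α)}` and `∫_0^{2^{-k}} σ ≍ α⁻¹·2^{-kα}`. -/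
theorem lacunary_weight_integrals :
    ∃ c₁ c₂ : ℝ, 0 < c₁ ∧ c₁ ≤ c₂ ∧ ∃ a₀ : ℕ, 1 ≤ a₀ ∧
      ∀ a : ℕ, a₀ ≤ a → ∀ k : ℕ, 1 ≤ k →
        (ENNReal.ofReal (c₁ * (2 : ℝ) ^ (-(k : ℝ) * (2 - (2 : ℝ) ^ (-(a : ℤ))))) ≤
            (∫⁻ x in Set.Ioo (0 : ℝ) ((2 : ℝ) ^ (-(k : ℤ))),
              ENNReal.ofReal ((lacWeight a x)⁻¹)) ∧
          (∫⁻ x in Set.Ioo (0 : ℝ) ((2 : ℝ) ^ (-(k : ℤ))),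
              ENNReal.ofReal ((lacWeight a x)⁻¹)) ≤
            ENNReal.ofReal (c₂ * (2 : ℝ) ^ (-(k : ℝ) * (2 - (2 : ℝ) ^ (-(a : ℤ)))))) ∧
        (ENNReal.ofReal
              (c₁ / (2 : ℝ) ^ (-(a : ℤ)) * (2 : ℝ) ^ (-(k : ℝ) * (2 : ℝ) ^ (-(a : ℤ)))) ≤
            (∫⁻ x in Set.Ioo (0 : ℝ) ((2 : ℝ) ^ (-(k : ℤ))),
              ENNReal.ofReal (lacWeight a x)) ∧
          (∫⁻ x in Set.Ioo (0 : ℝ) ((2 : ℝ) ^ (-(k : ℤ))),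
              ENNReal.ofReal (lacWeight a x)) ≤
            ENNReal.ofReal
              (c₂ / (2 : ℝ) ^ (-(a : ℤ)) * (2 : ℝ) ^ (-(k : ℝ) * (2 : ℝ) ^ (-(a : ℤ))))) := by
  refine ⟨1/8, 8, by norm_num, by norm_num, 3, by norm_num, ?_⟩
  intro a ha k hk
  have hk1 : (1:ℝ) ≤ (k:ℝ) := by exact_mod_cast hk
  have hαe0 : (2:ℝ) ^ (-(a:ℤ)) = (2:ℝ) ^ (-(a:ℝ)) := by
    rw [two_zpow_rpow]; push_cast; ring_nf
  set α : ℝ := (2:ℝ) ^ (-(a:ℤ)) with hαdef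
  rename' hαe0 => hαe
  have hα0 : 0 < α := hαe ▸ two_rpow_pos _
  have hα8 : α ≤ 1/8 := by
    have ha3 : (3:ℝ) ≤ (a:ℝ) := by exact_mod_cast ha
    have h1 : (2:ℝ) ^ (-(a:ℝ)) ≤ (2:ℝ) ^ (-3:ℝ) := two_rpow_mono (by linarith)
    have h8 : (2:ℝ) ^ (-3:ℝ) = 1/8 := by
      rw [show (-3:ℝ) = ((-3:ℤ):ℝ) by norm_num, Real.rpow_intCast]; norm_num
    rw [hαe]; rw [h8] at h1; exact h1
  -- decomposition
  set g : ℕ → Set ℝ := fun n =>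
    Ico ((2:ℝ) ^ (-((k+n:ℕ):ℤ) - 1)) ((2:ℝ) ^ (-((k+n:ℕ):ℤ))) with hgdef
  have hgmeas : ∀ n, MeasurableSet (g n) := fun n => measurableSet_Ico
  have hgdisj : Pairwise (Function.onFun Disjoint g) := by
    intro m n hmn
    wlog hlt : m < n generalizing m n
    · exact (this hmn.symm (by omega)).symm
    have : Disjoint (g m) (g n) := by
      rw [hgdef]
      rw [Set.Ico_disjoint_Ico]
      calc min ((2:ℝ) ^ (-((k+m:ℕ):ℤ))) ((2:ℝ) ^ (-((k+n:ℕ):ℤ)))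
          ≤ (2:ℝ) ^ (-((k+n:ℕ):ℤ)) := min_le_right _ _
        _ ≤ (2:ℝ) ^ (-((k+m:ℕ):ℤ) - 1) := zpow_le_zpow_right₀ one_le_two (by push_cast; omega)
        _ ≤ max ((2:ℝ) ^ (-((k+m:ℕ):ℤ) - 1)) ((2:ℝ) ^ (-((k+n:ℕ):ℤ) - 1)) := le_max_left _ _
    exact this
  have hU : Ioo (0:ℝ) ((2:ℝ) ^ (-(k:ℤ))) = ⋃ n : ℕ, g n := by
    ext x
    simp only [hgdef, mem_Ioo, mem_iUnion, mem_Ico]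
    constructor
    · rintro ⟨hx0, hxk⟩
      obtain ⟨n, hn1, hn2⟩ := exists_mem_Ico_zpow hx0 one_lt_two
      have hnk : n < -(k:ℤ) := by
        by_contra hcon
        push_neg at hcon
        have : (2:ℝ) ^ (-(k:ℤ)) ≤ (2:ℝ) ^ n := zpow_le_zpow_right₀ one_le_two hcon
        linarith
      have hm : ((-(k:ℤ) - 1 - n).toNat : ℤ) = -(k:ℤ) - 1 - n := Int.toNat_of_nonneg (by omega)
      refine ⟨(-(k:ℤ) - 1 - n).toNat, ?_, ?_⟩
      · have e : (-(((k + (-(k:ℤ) - 1 - n).toNat : ℕ)):ℤ) - 1) = n := by push_cast [hm]; omega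
        rw [e]; exact hn1
      · have e : (-(((k + (-(k:ℤ) - 1 - n).toNat : ℕ)):ℤ)) = n + 1 := by push_cast [hm]; omega
        rw [e]; exact hn2
    · rintro ⟨n, hn1, hn2⟩
      constructor
      · exact lt_of_lt_of_le (zpow_pos two_pos _) hn1
      · exact lt_of_lt_of_le hn2 (zpow_le_zpow_right₀ one_le_two (by push_cast; omega))
  have hdecomp : ∀ f : ℝ → ℝ≥0∞,
      (∫⁻ x in Ioo (0:ℝ) ((2:ℝ) ^ (-(k:ℤ))), f x) = ∑' n : ℕ, ∫⁻ x in g n, f x := fun f => by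
    rw [hU]; exact lintegral_iUnion hgmeas hgdisj f
  -- geometric data
  have hr1 := one_sub_bounds hα0 hα8
  have hr1pos : 0 < 1 - (2:ℝ) ^ (-α) := lt_of_lt_of_le (by linarith) hr1.1
  have hr1lt : (2:ℝ) ^ (-α) < 1 := by linarith
  have hr2le : (2:ℝ) ^ (-(2 - α)) ≤ 1/2 := by
    have := two_rpow_mono (show -(2 - α) ≤ -1 by linarith)
    have h2 : (2:ℝ) ^ (-1:ℝ) = 1/2 := by
      rw [show (-1:ℝ) = ((-1:ℤ):ℝ) by norm_num, Real.rpow_intCast]; norm_num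
    rw [h2] at this; exact this
  have hr2lt : (2:ℝ) ^ (-(2 - α)) < 1 := lt_of_le_of_lt hr2le (by norm_num)
  -- conversions of geometric terms
  have conv1 : ∀ n : ℕ, (2:ℝ) ^ (-(((k+n:ℕ)):ℝ) * (2 - α)) =
      (2:ℝ) ^ (-(k:ℝ) * (2 - α)) * ((2:ℝ) ^ (-(2 - α))) ^ n := by
    intro n
    rw [← Real.rpow_natCast ((2:ℝ) ^ (-(2 - α))) n, two_rpow_rpow, ← two_rpow_add]
    exact two_rpow_congr (by push_cast; ring)
  have conv2 : ∀ n : ℕ, (2:ℝ) ^ (-(((k+n:ℕ)):ℝ) * α) =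
      (2:ℝ) ^ (-(k:ℝ) * α) * ((2:ℝ) ^ (-α)) ^ n := by
    intro n
    rw [← Real.rpow_natCast ((2:ℝ) ^ (-α)) n, two_rpow_rpow, ← two_rpow_add]
    exact two_rpow_congr (by push_cast; ring)
  refine ⟨⟨?_, ?_⟩, ?_, ?_⟩
  · -- W lower: just the first interval
    have hsub : Ico ((2:ℝ) ^ (-(k:ℤ) - 1)) ((2:ℝ) ^ (-(k:ℤ))) ⊆
        Ioo (0:ℝ) ((2:ℝ) ^ (-(k:ℤ))) := fun x hx =>
      ⟨lt_of_lt_of_le (zpow_pos two_pos _) hx.1, hx.2⟩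
    refine le_trans ?_ (lintegral_mono_set hsub)
    refine le_trans (ENNReal.ofReal_le_ofReal ?_) (interval_bounds a k ha hk).1
    rw [div_eq_mul_inv]; ring_nf; rfl
  · -- W upper
    rw [hdecomp]
    calc ∑' n : ℕ, ∫⁻ x in g n, ENNReal.ofReal ((lacWeight a x)⁻¹)
        ≤ ∑' n : ℕ, ENNReal.ofReal ((3 * (2:ℝ) ^ (-(k:ℝ) * (2 - α))) *
            ((2:ℝ) ^ (-(2 - α))) ^ n) := by
          apply ENNReal.tsum_le_tsum
          intro n
          refine le_trans (interval_bounds a (k+n) ha (by omega)).2.1 (le_of_eq ?_)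
          rw [conv1 n]; ring_nf
      _ = ENNReal.ofReal (3 * (2:ℝ) ^ (-(k:ℝ) * (2 - α))) *
            ENNReal.ofReal ((1 - (2:ℝ) ^ (-(2 - α)))⁻¹) :=
          tsum_ofReal_geom _ _ (by positivity) (two_rpow_pos _).le hr2lt
      _ ≤ ENNReal.ofReal (8 * (2:ℝ) ^ (-(k:ℝ) * (2 - α))) := by
          rw [← ENNReal.ofReal_mul (by positivity)]
          apply ENNReal.ofReal_le_ofReal
          have hinv : (1 - (2:ℝ) ^ (-(2 - α)))⁻¹ ≤ 2 := by
            have : (1:ℝ)/2 ≤ 1 - (2:ℝ) ^ (-(2 - α)) := by linarith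
            calc (1 - (2:ℝ) ^ (-(2 - α)))⁻¹ ≤ ((1:ℝ)/2)⁻¹ := inv_mono' (by norm_num) this
            _ = 2 := by norm_num
          nlinarith [two_rpow_pos (-(k:ℝ) * (2 - α)), hr2le]
  · -- S lower
    rw [hdecomp]
    calc ENNReal.ofReal (1/8 / α * (2:ℝ) ^ (-(k:ℝ) * α))
        ≤ ENNReal.ofReal (((2:ℝ) ^ (-(k:ℝ) * α) / 4) * (1 - (2:ℝ) ^ (-α))⁻¹) := by
          apply ENNReal.ofReal_le_ofReal
          have hinv : α⁻¹ ≤ (1 - (2:ℝ) ^ (-α))⁻¹ := inv_mono' hr1pos hr1.2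
          have hp := two_rpow_pos (-(k:ℝ) * α)
          calc (1:ℝ)/8 / α * (2:ℝ) ^ (-(k:ℝ) * α)
              = ((2:ℝ) ^ (-(k:ℝ) * α) / 4) * (α⁻¹ / 2) := by
                rw [div_eq_mul_inv (1/8 : ℝ)]; ring
            _ ≤ ((2:ℝ) ^ (-(k:ℝ) * α) / 4) * (1 - (2:ℝ) ^ (-α))⁻¹ := by
                apply mul_le_mul_of_nonneg_left _ (by positivity)
                have : 0 < α⁻¹ := inv_pos.2 hα0
                linarith
      _ = ENNReal.ofReal ((2:ℝ) ^ (-(k:ℝ) * α) / 4) *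
            ENNReal.ofReal ((1 - (2:ℝ) ^ (-α))⁻¹) := by
          rw [← ENNReal.ofReal_mul (by positivity)]
      _ = ∑' n : ℕ, ENNReal.ofReal (((2:ℝ) ^ (-(k:ℝ) * α) / 4) * ((2:ℝ) ^ (-α)) ^ n) :=
          (tsum_ofReal_geom ((2:ℝ) ^ (-(k:ℝ) * α) / 4) ((2:ℝ) ^ (-α)) (by positivity) (two_rpow_pos _).le hr1lt).symm
      _ ≤ ∑' n : ℕ, ∫⁻ x in g n, ENNReal.ofReal (lacWeight a x) := by
          apply ENNReal.tsum_le_tsum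
          intro n
          refine le_trans (le_of_eq ?_) (interval_bounds a (k+n) ha (by omega)).2.2.1
          rw [conv2 n]; ring_nf
  · -- S upper
    rw [hdecomp]
    calc ∑' n : ℕ, ∫⁻ x in g n, ENNReal.ofReal (lacWeight a x)
        ≤ ∑' n : ℕ, ENNReal.ofReal ((2 * (2:ℝ) ^ (-(k:ℝ) * α)) * ((2:ℝ) ^ (-α)) ^ n) := by
          apply ENNReal.tsum_le_tsum
          intro n
          refine le_trans (interval_bounds a (k+n) ha (by omega)).2.2.2 (le_of_eq ?_)
          rw [conv2 n]; ring_nf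
      _ = ENNReal.ofReal (2 * (2:ℝ) ^ (-(k:ℝ) * α)) *
            ENNReal.ofReal ((1 - (2:ℝ) ^ (-α))⁻¹) :=
          tsum_ofReal_geom _ _ (by positivity) (two_rpow_pos _).le hr1lt
      _ ≤ ENNReal.ofReal (8 / α * (2:ℝ) ^ (-(k:ℝ) * α)) := by
          rw [← ENNReal.ofReal_mul (by positivity)]
          apply ENNReal.ofReal_le_ofReal
          have hinv : (1 - (2:ℝ) ^ (-α))⁻¹ ≤ 2/α := by
            calc (1 - (2:ℝ) ^ (-α))⁻¹ ≤ (α/2)⁻¹ := inv_mono' (by linarith) hr1.1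
            _ = 2/α := by rw [inv_div]
          have hp := two_rpow_pos (-(k:ℝ) * α)
          calc 2 * (2:ℝ) ^ (-(k:ℝ) * α) * (1 - (2:ℝ) ^ (-α))⁻¹
              ≤ 2 * (2:ℝ) ^ (-(k:ℝ) * α) * (2/α) := by
                apply mul_le_mul_of_nonneg_left hinv (by positivity)
            _ ≤ 8 / α * (2:ℝ) ^ (-(k:ℝ) * α) := by
                rw [div_eq_mul_inv, div_eq_mul_inv]
                have : 0 < α⁻¹ := inv_pos.2 hα0
                nlinarith
end
end

section
/- There exist absolute constants 0 < c₁ ≤ c₂ and an integer a₀ ≥ 1 such that for all integers a ≥ a₀, k ≥ 1, and m with k + 2 ≤ m ≤ k + a (with α = 2^{−a} and σ, w the lacunary weights constructed from a), setting I := [2^{−k} − 2^{−m}, 2^{−k}): c₁·2^{−k(2−α)} ≤ ∫_I w(x) dx ≤ c₂·2^{−k(2−α)} and c₁·2^{−kα+k−m} ≤ ∫_I σ(x) dx ≤ c₂·2^{−kα+k−m}. -/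
open MeasureTheory Set Filter
open scoped ENNReal NNReal

noncomputable section

lemma nat_two_mul_le_two_pow (a : ℕ) (ha : 1 ≤ a) : 2 * a ≤ 2 ^ a := by
  induction a with
  | zero => omega
  | succ n ih =>
    rcases Nat.lt_or_ge n 1 with h | hn
    · interval_cases n <;> norm_num
    · have h2 : 2 ≤ 2 ^ n := Nat.one_lt_two_pow_iff.mpr (by omega)
      have h3 := ih hn
      have : 2 ^ (n + 1) = 2 ^ n + 2 ^ n := by ring
      omega

lemma lac_eval (a k : ℕ) (ha : 1 ≤ a) (hk : 1 ≤ k) (x : ℝ)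
    (hx1 : 3 / 4 * (2 : ℝ) ^ (-(k : ℤ)) ≤ x) (hx2 : x < (2 : ℝ) ^ (-(k : ℤ))) :
    lacWeight a x =
      if x < (1 - (2 : ℝ) ^ (-(a : ℤ))) * (2 : ℝ) ^ (-(k : ℤ)) then
        x ^ ((2 : ℝ) ^ (-(a : ℤ)) - 1)
      else (2 : ℝ) ^ (2 * (k : ℝ) * (1 - (2 : ℝ) ^ (-(a : ℤ)))) / (2 : ℝ) ^ (-(a : ℤ)) *
        ((2 : ℝ) ^ (-(k : ℤ)) - x) ^ (1 - (2 : ℝ) ^ (-(a : ℤ))) := by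
  have hT0 : (0:ℝ) < (2 : ℝ) ^ (-(k : ℤ)) := zpow_pos (by norm_num) _
  have hx0 : 0 < x := lt_of_lt_of_le (by positivity) hx1
  have hα0 : (0:ℝ) < (2 : ℝ) ^ (-(a : ℤ)) := zpow_pos (by norm_num) _
  have hαhalf : (2 : ℝ) ^ (-(a : ℤ)) ≤ 1/2 := by
    have : (2 : ℝ) ^ (-(a : ℤ)) ≤ (2:ℝ) ^ (-1 : ℤ) :=
      zpow_le_zpow_right₀ one_le_two (by omega)
    simpa using this
  have hThalf : (2 : ℝ) ^ (-(k : ℤ)) ≤ 1/2 := by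
    have : (2 : ℝ) ^ (-(k : ℤ)) ≤ (2:ℝ) ^ (-1 : ℤ) :=
      zpow_le_zpow_right₀ one_le_two (by omega)
    simpa using this
  have habs : |x| = x := abs_of_pos hx0
  have hlt : x < 1/2 := lt_of_lt_of_le hx2 hThalf
  -- ceiling computation
  have hceil : ⌈-Real.logb 2 x⌉ = (k : ℤ) + 1 := by
    rw [Int.ceil_eq_iff]
    constructor
    · push_cast
      have : Real.logb 2 x < Real.logb 2 ((2:ℝ) ^ (-(k:ℤ))) :=
        Real.logb_lt_logb (by norm_num) hx0 hx2
      rw [← Real.rpow_intCast 2 (-(k:ℤ)), Real.logb_rpow (by norm_num) (by norm_num)] at this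
      push_cast at this
      linarith
    · push_cast
      have h1 : (2:ℝ) ^ (-(k:ℤ) - 1) ≤ x := by
        have : (2:ℝ) ^ (-(k:ℤ) - 1) = (2:ℝ) ^ (-(k:ℤ)) / 2 := by
          rw [zpow_sub₀ (by norm_num)]; norm_num
        rw [this]; linarith
      have : Real.logb 2 ((2:ℝ) ^ (-(k:ℤ) - 1)) ≤ Real.logb 2 x :=
        (Real.logb_le_logb (by norm_num) (zpow_pos (by norm_num) _) hx0).2 h1
      rw [← Real.rpow_intCast 2 (-(k:ℤ) - 1), Real.logb_rpow (by norm_num) (by norm_num)] at this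
      push_cast at this
      linarith
  have hk' : ⌈-Real.logb 2 x⌉ - 1 = (k : ℤ) := by omega
  have hne : ¬ (1/2 : ℝ) ≤ x := not_le.mpr hlt
  have hxne : x ≠ 0 := ne_of_gt hx0
  have hcond1 : ¬ x < (1 + (2 : ℝ) ^ (-(a : ℤ))) * (2 : ℝ) ^ (-((k:ℤ) + 1)) := by
    push_neg
    have h2 : (2:ℝ) ^ (-((k:ℤ)+1)) = (2:ℝ) ^ (-(k:ℤ)) / 2 := by
      rw [show -((k:ℤ)+1) = -(k:ℤ) - 1 by ring, zpow_sub₀ (by norm_num)]; norm_num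
    rw [h2]
    nlinarith
  simp only [lacWeight, habs, hxne, if_false, hne, hk', hcond1]
  norm_cast

lemma lint_const_ub (f : ℝ → ℝ) (u v M : ℝ) (huv : u ≤ v)
    (h : ∀ x ∈ Set.Ico u v, f x ≤ M) :
    ∫⁻ x in Set.Ico u v, ENNReal.ofReal (f x) ≤ ENNReal.ofReal (M * (v - u)) := by
  calc ∫⁻ x in Set.Ico u v, ENNReal.ofReal (f x)
      ≤ ∫⁻ _ in Set.Ico u v, ENNReal.ofReal M :=
        setLIntegral_mono' measurableSet_Ico fun x hx =>
          ENNReal.ofReal_le_ofReal (h x hx)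
    _ = ENNReal.ofReal M * ENNReal.ofReal (v - u) := by
        rw [setLIntegral_const, Real.volume_Ico]
    _ = ENNReal.ofReal (M * (v - u)) := by
        rw [ENNReal.ofReal_mul' (by linarith)]

lemma lint_const_lb (f : ℝ → ℝ) (u v c : ℝ) (huv : u ≤ v) (hc : 0 ≤ c)
    (h : ∀ x ∈ Set.Ico u v, c ≤ f x) :
    ENNReal.ofReal (c * (v - u)) ≤ ∫⁻ x in Set.Ico u v, ENNReal.ofReal (f x) := by
  calc ENNReal.ofReal (c * (v - u))
      = ENNReal.ofReal c * ENNReal.ofReal (v - u) := ENNReal.ofReal_mul hc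
    _ = ∫⁻ _ in Set.Ico u v, ENNReal.ofReal c := by
        rw [setLIntegral_const, Real.volume_Ico]
    _ ≤ ∫⁻ x in Set.Ico u v, ENNReal.ofReal (f x) :=
        setLIntegral_mono' measurableSet_Ico fun x hx =>
          ENNReal.ofReal_le_ofReal (h x hx)

lemma lint_singular (c₀ β u v : ℝ) (hc : 0 ≤ c₀) (hβ : 0 < β) (huv : u ≤ v) :
    ∫⁻ x in Set.Ico u v, ENNReal.ofReal (c₀ * (v - x) ^ (β - 1)) =
      ENNReal.ofReal (c₀ * (v - u) ^ β / β) := by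
  have hres : volume.restrict (Set.Ico u v) = volume.restrict (Set.Ioo u v) :=
    (Measure.restrict_congr_set Ioo_ae_eq_Ico).symm
  rw [hres]
  have hint : IntervalIntegrable (fun x => c₀ * (v - x) ^ (β - 1)) volume u v := by
    have h1 : IntervalIntegrable (fun x => c₀ * x ^ (β - 1)) volume (v - v) (v - u) :=
      (intervalIntegral.intervalIntegrable_rpow' (by linarith)).const_mul c₀
    simpa using (h1.comp_sub_left v).symm
  have hIoo : IntegrableOn (fun x => c₀ * (v - x) ^ (β - 1)) (Set.Ioo u v) volume :=
    (hint.1.mono_set Set.Ioo_subset_Ioc_self)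
  have hpos : 0 ≤ᵐ[volume.restrict (Set.Ioo u v)] fun x => c₀ * (v - x) ^ (β - 1) := by
    filter_upwards [ae_restrict_mem measurableSet_Ioo] with x hx
    have : (0:ℝ) ≤ (v - x) ^ (β - 1) := Real.rpow_nonneg (by linarith [hx.2]) _
    positivity
  rw [← ofReal_integral_eq_lintegral_ofReal hIoo hpos]
  congr 1
  have h1 : ∫ x in Set.Ioo u v, c₀ * (v - x) ^ (β - 1) = ∫ x in u..v, c₀ * (v - x) ^ (β - 1) := by
    rw [intervalIntegral.integral_of_le huv, integral_Ioc_eq_integral_Ioo]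
  rw [h1, intervalIntegral.integral_comp_sub_left (fun y => c₀ * y ^ (β - 1)) v, sub_self,
    intervalIntegral.integral_const_mul, integral_rpow (Or.inl (by linarith))]
  rw [Real.zero_rpow (by linarith : β - 1 + 1 ≠ 0)]
  ring_nf

set_option maxHeartbeats 2000000 in
/-- Integrals of the lacunary weights over the intermediate intervals
`I = [2^{-k} - 2^{-m}, 2^{-k})`, `k + 2 ≤ m ≤ k + a`:
`∫_I w ≍ 2^{-k(2-α)}` and `∫_I σ ≍ 2^{-kα + k - m}`. -/
theorem lacunary_weight_integrals_intermediate :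
    ∃ c₁ c₂ : ℝ, 0 < c₁ ∧ c₁ ≤ c₂ ∧ ∃ a₀ : ℕ, 1 ≤ a₀ ∧
      ∀ a : ℕ, a₀ ≤ a → ∀ k : ℕ, 1 ≤ k → ∀ m : ℕ, k + 2 ≤ m → m ≤ k + a →
        (ENNReal.ofReal (c₁ * (2 : ℝ) ^ (-(k : ℝ) * (2 - (2 : ℝ) ^ (-(a : ℤ))))) ≤
            (∫⁻ x in Set.Ico ((2 : ℝ) ^ (-(k : ℤ)) - (2 : ℝ) ^ (-(m : ℤ))) ((2 : ℝ) ^ (-(k : ℤ))),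
              ENNReal.ofReal ((lacWeight a x)⁻¹)) ∧
          (∫⁻ x in Set.Ico ((2 : ℝ) ^ (-(k : ℤ)) - (2 : ℝ) ^ (-(m : ℤ))) ((2 : ℝ) ^ (-(k : ℤ))),
              ENNReal.ofReal ((lacWeight a x)⁻¹)) ≤
            ENNReal.ofReal (c₂ * (2 : ℝ) ^ (-(k : ℝ) * (2 - (2 : ℝ) ^ (-(a : ℤ)))))) ∧
        (ENNReal.ofReal
              (c₁ * (2 : ℝ) ^ (-(k : ℝ) * (2 : ℝ) ^ (-(a : ℤ)) + (k : ℝ) - (m : ℝ))) ≤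
            (∫⁻ x in Set.Ico ((2 : ℝ) ^ (-(k : ℤ)) - (2 : ℝ) ^ (-(m : ℤ))) ((2 : ℝ) ^ (-(k : ℤ))),
              ENNReal.ofReal (lacWeight a x)) ∧
          (∫⁻ x in Set.Ico ((2 : ℝ) ^ (-(k : ℤ)) - (2 : ℝ) ^ (-(m : ℤ))) ((2 : ℝ) ^ (-(k : ℤ))),
              ENNReal.ofReal (lacWeight a x)) ≤
            ENNReal.ofReal
              (c₂ * (2 : ℝ) ^ (-(k : ℝ) * (2 : ℝ) ^ (-(a : ℤ)) + (k : ℝ) - (m : ℝ)))) := by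
  refine ⟨1/2, 3, by norm_num, by norm_num, 1, le_rfl, ?_⟩
  intro a ha k hk m hm1 hm2
  set α : ℝ := (2:ℝ) ^ (-(a:ℤ)) with hαdef
  set T : ℝ := (2:ℝ) ^ (-(k:ℤ)) with hTdef
  set M2 : ℝ := (2:ℝ) ^ (-(m:ℤ)) with hMdef
  have hα0 : 0 < α := zpow_pos (by norm_num) _
  have hT0 : 0 < T := zpow_pos (by norm_num) _
  have hM0 : 0 < M2 := zpow_pos (by norm_num) _
  have hαh : α ≤ 1/2 := by
    rw [hαdef]
    have := zpow_le_zpow_right₀ (one_le_two (α := ℝ)) (show -(a:ℤ) ≤ -1 by omega)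
    simpa using this
  have hMT : M2 ≤ T/4 := by
    rw [hMdef, hTdef]
    have := zpow_le_zpow_right₀ (one_le_two (α := ℝ)) (show -(m:ℤ) ≤ -(k:ℤ) - 2 by omega)
    rw [zpow_sub₀ (by norm_num : (2:ℝ) ≠ 0)] at this
    norm_num at this ⊢
    linarith
  have hsM : α * T ≤ M2 := by
    rw [hαdef, hTdef, hMdef, ← zpow_add₀ (by norm_num : (2:ℝ) ≠ 0)]
    exact zpow_le_zpow_right₀ one_le_two (by omega)
  set L : ℝ := T - M2 with hLdef
  set t : ℝ := T - α * T with htdef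
  set C : ℝ := (2:ℝ) ^ (2 * (k:ℝ) * (1 - α)) / α with hCdef
  have hC0 : 0 < C := div_pos (Real.rpow_pos_of_pos (by norm_num) _) hα0
  have hLt : L ≤ t := by rw [hLdef, htdef]; linarith
  have htT : t < T := by rw [htdef]; nlinarith
  have hL3 : 3/4 * T ≤ L := by rw [hLdef]; linarith
  have hL0 : 0 < L := by nlinarith
  have htL : 0 ≤ t - L := by linarith
  -- branch evaluation
  have heval : ∀ x, 3/4 * T ≤ x → x < T →
      lacWeight a x = if x < (1 - α) * T then x ^ (α - 1) else C * (T - x) ^ (1 - α) := by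
    intro x h1 h2
    rw [hTdef] at h1 h2
    rw [hCdef, hαdef, hTdef]
    exact lac_eval a k ha hk x h1 h2
  have hx0' : ∀ x ∈ Set.Ico L T, 0 < x := fun x hx => lt_of_lt_of_le hL0 hx.1
  -- splitting
  have hIco : Set.Ico L T = Set.Ico L t ∪ Set.Ico t T := (Set.Ico_union_Ico_eq_Ico hLt htT.le).symm
  have hsplit : ∀ F : ℝ → ℝ≥0∞, ∫⁻ x in Set.Ico L T, F x
      = (∫⁻ x in Set.Ico L t, F x) + ∫⁻ x in Set.Ico t T, F x := by
    intro F
    rw [hIco, lintegral_union measurableSet_Ico (Set.Ico_disjoint_Ico_same)]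
  -- evaluations on subintervals
  have hmid : ∀ x ∈ Set.Ico L t, lacWeight a x = x ^ (α - 1) := by
    intro x hx
    rw [heval x (le_trans hL3 hx.1) (lt_trans hx.2 htT), if_pos]
    calc x < t := hx.2
    _ = (1 - α) * T := by rw [htdef]; ring
  have hsing : ∀ x ∈ Set.Ico t T, lacWeight a x = C * (T - x) ^ (1 - α) := by
    intro x hx
    rw [heval x (le_trans hL3 (le_trans hLt hx.1)) hx.2, if_neg]
    push_neg
    calc (1 - α) * T = t := by rw [htdef]; ring
    _ ≤ x := hx.1
  -- w on middle
  have hWmid_eq : ∫⁻ x in Set.Ico L t, ENNReal.ofReal ((lacWeight a x)⁻¹)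
      = ∫⁻ x in Set.Ico L t, ENNReal.ofReal (x ^ (1 - α)) := by
    refine setLIntegral_congr_fun measurableSet_Ico (fun x hx => ?_)
    have hx0 : 0 < x := lt_of_lt_of_le hL0 hx.1
    rw [hmid x hx, show (1 - α) = -(α - 1) by ring, Real.rpow_neg hx0.le]
  have hWmid_le : ∫⁻ x in Set.Ico L t, ENNReal.ofReal ((lacWeight a x)⁻¹)
      ≤ ENNReal.ofReal (T ^ (1 - α) * (t - L)) := by
    rw [hWmid_eq]
    refine lint_const_ub _ L t _ hLt fun x hx => ?_
    have hx0 : 0 < x := lt_of_lt_of_le hL0 hx.1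
    exact Real.rpow_le_rpow hx0.le (le_of_lt (lt_of_lt_of_le hx.2 (le_of_lt htT))) (by linarith)
  -- w on singular part
  have hWsing_eq : ∫⁻ x in Set.Ico t T, ENNReal.ofReal ((lacWeight a x)⁻¹)
      = ENNReal.ofReal (C⁻¹ * (α * T) ^ α / α) := by
    have h1 : ∫⁻ x in Set.Ico t T, ENNReal.ofReal ((lacWeight a x)⁻¹)
        = ∫⁻ x in Set.Ico t T, ENNReal.ofReal (C⁻¹ * (T - x) ^ (α - 1)) := by
      refine setLIntegral_congr_fun measurableSet_Ico (fun x hx => ?_)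
      rw [hsing x hx, mul_inv, show (α - 1) = -(1 - α) by ring,
        Real.rpow_neg (by linarith [hx.2] : (0:ℝ) ≤ T - x)]
    rw [h1, lint_singular C⁻¹ α t T (inv_nonneg.mpr hC0.le) hα0 htT.le,
      show T - t = α * T by rw [htdef]; ring]
  -- σ on middle
  have hσmid_eq : ∫⁻ x in Set.Ico L t, ENNReal.ofReal (lacWeight a x)
      = ∫⁻ x in Set.Ico L t, ENNReal.ofReal (x ^ (α - 1)) :=
    setLIntegral_congr_fun measurableSet_Ico (fun x hx => by rw [hmid x hx])
  have hσmid_le : ∫⁻ x in Set.Ico L t, ENNReal.ofReal (lacWeight a x)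
      ≤ ENNReal.ofReal ((T/2) ^ (α - 1) * (t - L)) := by
    rw [hσmid_eq]
    refine lint_const_ub _ L t _ hLt fun x hx => ?_
    exact Real.rpow_le_rpow_of_nonpos (by linarith) (by linarith [hx.1]) (by linarith)
  have hσmid_ge : ENNReal.ofReal (T ^ (α - 1) * (t - L))
      ≤ ∫⁻ x in Set.Ico L t, ENNReal.ofReal (lacWeight a x) := by
    rw [hσmid_eq]
    refine lint_const_lb _ L t _ hLt (Real.rpow_nonneg hT0.le _) fun x hx => ?_
    exact Real.rpow_le_rpow_of_nonpos (lt_of_lt_of_le hL0 hx.1)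
      (le_of_lt (lt_of_lt_of_le hx.2 htT.le)) (by linarith)
  -- σ on singular part
  have hσsing_eq : ∫⁻ x in Set.Ico t T, ENNReal.ofReal (lacWeight a x)
      = ENNReal.ofReal (C * (α * T) ^ (2 - α) / (2 - α)) := by
    have h1 : ∫⁻ x in Set.Ico t T, ENNReal.ofReal (lacWeight a x)
        = ∫⁻ x in Set.Ico t T, ENNReal.ofReal (C * (T - x) ^ ((2 - α) - 1)) := by
      refine setLIntegral_congr_fun measurableSet_Ico (fun x hx => ?_)
      rw [hsing x hx, show (2 - α) - 1 = 1 - α by ring]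
    rw [h1, lint_singular C (2 - α) t T hC0.le (by linarith) htT.le,
      show T - t = α * T by rw [htdef]; ring]
  -- conversions to rpow
  have h2p : (0:ℝ) < 2 := by norm_num
  have h2pos : ∀ p : ℝ, 0 < (2:ℝ) ^ p := fun p => Real.rpow_pos_of_pos h2p p
  have hle2 : ∀ p q : ℝ, p ≤ q → (2:ℝ) ^ p ≤ (2:ℝ) ^ q := fun _ _ h =>
    Real.rpow_le_rpow_of_exponent_le one_le_two h
  have hαr : α = (2:ℝ) ^ (-(a:ℝ)) := by
    rw [hαdef, ← Real.rpow_intCast 2 (-(a:ℤ))]; norm_num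
  have hTr : T = (2:ℝ) ^ (-(k:ℝ)) := by
    rw [hTdef, ← Real.rpow_intCast 2 (-(k:ℤ))]; norm_num
  have hMr : M2 = (2:ℝ) ^ (-(m:ℝ)) := by
    rw [hMdef, ← Real.rpow_intCast 2 (-(m:ℤ))]; norm_num
  have hTpow : ∀ p : ℝ, T ^ p = (2:ℝ) ^ (-(k:ℝ) * p) := fun p => by
    rw [hTr, ← Real.rpow_mul (by norm_num)]
  have hαpow : ∀ p : ℝ, α ^ p = (2:ℝ) ^ (-(a:ℝ) * p) := fun p => by
    rw [hαr, ← Real.rpow_mul (by norm_num)]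
  have hm1c : (k:ℝ) + 2 ≤ (m:ℝ) := by exact_mod_cast hm1
  have hm2c : (m:ℝ) ≤ (k:ℝ) + (a:ℝ) := by exact_mod_cast hm2
  have haα : (a:ℝ) * α ≤ 1/2 := by
    have hn := nat_two_mul_le_two_pow a ha
    have h2a : 2*(a:ℝ) ≤ (2:ℝ)^(a:ℕ) := by exact_mod_cast hn
    have hα' : α = ((2:ℝ)^(a:ℕ))⁻¹ := by rw [hαdef, zpow_neg, zpow_natCast]
    have hp : (0:ℝ) < (2:ℝ)^(a:ℕ) := by positivity
    rw [hα']
    have h3 := mul_le_mul_of_nonneg_right h2a (inv_nonneg.mpr hp.le)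
    rw [mul_inv_cancel₀ hp.ne'] at h3
    linarith
  have haα0 : 0 ≤ (a:ℝ) * α := mul_nonneg (Nat.cast_nonneg a) hα0.le
  have hsqrt : (2:ℝ) ^ ((1:ℝ)/2) ≤ 3/2 := by
    rw [show ((1:ℝ)/2) = (1/2 : ℝ) by norm_num, ← Real.sqrt_eq_rpow]
    have h1 : Real.sqrt 2 ≤ Real.sqrt (9/4) := Real.sqrt_le_sqrt (by norm_num)
    have h2 : Real.sqrt (9/4) = 3/2 := by
      rw [show (9/4:ℝ) = (3/2)^2 by norm_num, Real.sqrt_sq (by norm_num)]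
    linarith
  have etL : t - L = M2 - α * T := by rw [htdef, hLdef]; ring
  have h2neg1 : (2:ℝ)^(-1:ℝ) = 1/2 := by
    rw [show (-1:ℝ) = ((-1:ℤ):ℝ) by norm_num, Real.rpow_intCast]; norm_num
  have h2neg2 : (2:ℝ)^(-2:ℝ) = 1/4 := by
    rw [show (-2:ℝ) = ((-2:ℤ):ℝ) by norm_num, Real.rpow_intCast]; norm_num
  have e2 : α * T = (2:ℝ) ^ (-(a:ℝ) + -(k:ℝ)) := by
    rw [hαr, hTr, ← Real.rpow_add h2p]
  have e3 : 2 * α = (2:ℝ) ^ (1 + -(a:ℝ)) := by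
    rw [hαr, Real.rpow_add h2p, Real.rpow_one]
  have hJ2w : C⁻¹ * (α * T) ^ α / α = (2:ℝ) ^ (-(k:ℝ)*(2-α) + -(a:ℝ)*α) := by
    have h1 : C⁻¹ * (α * T) ^ α / α
        = ((2:ℝ)^(-(a:ℝ)*α) * (2:ℝ)^(-(k:ℝ)*α)) / (2:ℝ)^(2*(k:ℝ)*(1-α)) := by
      rw [hCdef, inv_div, Real.mul_rpow hα0.le hT0.le, hαpow, hTpow]
      field_simp
      try ring
    rw [h1, ← Real.rpow_add h2p, ← Real.rpow_sub h2p,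
      show -(a:ℝ)*α + -(k:ℝ)*α - 2*(k:ℝ)*(1-α) = -(k:ℝ)*(2-α) + -(a:ℝ)*α by ring]
  have hσ2 : C * (α * T) ^ (2-α) / (2-α)
      = (2:ℝ) ^ (-(k:ℝ)*α - 2*(a:ℝ) + (a:ℝ)*α) / (α*(2-α)) := by
    have h1 : C * (α * T) ^ (2-α) / (2-α)
        = ((2:ℝ)^(2*(k:ℝ)*(1-α)) * ((2:ℝ)^(-(a:ℝ)*(2-α)) * (2:ℝ)^(-(k:ℝ)*(2-α))))
            / (α*(2-α)) := by
      rw [hCdef, Real.mul_rpow hα0.le hT0.le, hαpow, hTpow]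
      field_simp
      try ring
    rw [h1, ← Real.rpow_add h2p, ← Real.rpow_add h2p,
      show 2*(k:ℝ)*(1-α) + (-(a:ℝ)*(2-α) + -(k:ℝ)*(2-α))
        = -(k:ℝ)*α - 2*(a:ℝ) + (a:ℝ)*α by ring]
  -- real-number inequalities
  have R1 : 1/2 * (2:ℝ) ^ (-(k:ℝ) * (2 - α)) ≤ C⁻¹ * (α * T) ^ α / α := by
    rw [hJ2w]
    calc 1/2 * (2:ℝ) ^ (-(k:ℝ) * (2 - α))
        = (2:ℝ) ^ (-1 + -(k:ℝ) * (2 - α)) := by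
          rw [Real.rpow_add h2p, h2neg1]
      _ ≤ (2:ℝ) ^ (-(k:ℝ)*(2-α) + -(a:ℝ)*α) := hle2 _ _ (by linarith [haα])
  have R2 : T ^ (1 - α) * (t - L) + C⁻¹ * (α * T) ^ α / α
      ≤ 3 * (2:ℝ) ^ (-(k:ℝ) * (2 - α)) := by
    have hb2 : C⁻¹ * (α * T) ^ α / α ≤ (2:ℝ) ^ (-(k:ℝ)*(2-α)) := by
      rw [hJ2w]; exact hle2 _ _ (by linarith [haα0])
    have hb1 : T ^ (1-α) * (t - L) ≤ 1/4 * (2:ℝ) ^ (-(k:ℝ)*(2-α)) := by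
      have h1 : t - L ≤ M2 := by rw [etL]; linarith [(mul_pos hα0 hT0)]
      calc T ^ (1-α) * (t - L) ≤ T ^ (1-α) * M2 :=
            mul_le_mul_of_nonneg_left h1 (Real.rpow_nonneg hT0.le _)
        _ = (2:ℝ)^(-(k:ℝ)*(1-α)) * (2:ℝ)^(-(m:ℝ)) := by rw [hTpow, hMr]
        _ = (2:ℝ)^(-(k:ℝ)*(1-α) + -(m:ℝ)) := (Real.rpow_add h2p _ _).symm
        _ ≤ (2:ℝ)^(-2 + -(k:ℝ)*(2-α)) := hle2 _ _ (by ring_nf; linarith [hm1c])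
        _ = 1/4 * (2:ℝ)^(-(k:ℝ)*(2-α)) := by
            rw [Real.rpow_add h2p, h2neg2]
    linarith [h2pos (-(k:ℝ)*(2-α))]
  have R3 : 1/2 * (2:ℝ) ^ (-(k:ℝ) * α + (k:ℝ) - (m:ℝ))
      ≤ T ^ (α - 1) * (t - L) + C * (α * T) ^ (2 - α) / (2 - α) := by
    set X : ℝ := (2:ℝ) ^ (-(k:ℝ) * α + (k:ℝ) - (m:ℝ)) with hXdef
    set Y : ℝ := (2:ℝ) ^ (-(k:ℝ) * α - (a:ℝ)) with hYdef
    have hXY : Y ≤ X := hle2 _ _ (by linarith)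
    have h_t1 : T ^ (α - 1) * (t - L) = X - Y := by
      calc T ^ (α - 1) * (t - L)
          = (2:ℝ)^(-(k:ℝ)*(α-1)) * ((2:ℝ)^(-(m:ℝ)) - (2:ℝ)^(-(a:ℝ) + -(k:ℝ))) := by
            rw [hTpow, etL, hMr, e2]
        _ = (2:ℝ)^(-(k:ℝ)*(α-1) + -(m:ℝ))
              - (2:ℝ)^(-(k:ℝ)*(α-1) + (-(a:ℝ) + -(k:ℝ))) := by
            rw [mul_sub, ← Real.rpow_add h2p, ← Real.rpow_add h2p]
        _ = X - Y := by
            rw [show -(k:ℝ)*(α-1) + -(m:ℝ) = -(k:ℝ) * α + (k:ℝ) - (m:ℝ) by ring,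
              show -(k:ℝ)*(α-1) + (-(a:ℝ) + -(k:ℝ)) = -(k:ℝ) * α - (a:ℝ) by ring]
    have hG_lb : Y * (1/2) ≤ C * (α * T) ^ (2 - α) / (2 - α) := by
      rw [hσ2]
      have hden2 : (0:ℝ) < α*(2-α) := by nlinarith
      have hden3 : α*(2-α) ≤ 2*α := by nlinarith
      have hd1 : (2:ℝ)^(-(k:ℝ)*α - 2*(a:ℝ) + (a:ℝ)*α) / (2*α)
          ≤ (2:ℝ)^(-(k:ℝ)*α - 2*(a:ℝ) + (a:ℝ)*α) / (α*(2-α)) :=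
        div_le_div_of_nonneg_left (h2pos _).le hden2 hden3
      refine le_trans ?_ hd1
      rw [e3, ← Real.rpow_sub h2p]
      calc Y * (1/2) = (2:ℝ)^(-(k:ℝ)*α - (a:ℝ) + -1) := by
            rw [hYdef, Real.rpow_add h2p, h2neg1]
        _ ≤ (2:ℝ)^(-(k:ℝ)*α - 2*(a:ℝ) + (a:ℝ)*α - (1 + -(a:ℝ))) := hle2 _ _ (by ring_nf; linarith [haα0])
    calc 1/2 * X ≤ (X - Y) + Y * (1/2) := by linarith
      _ ≤ T ^ (α - 1) * (t - L) + C * (α * T) ^ (2 - α) / (2 - α) := by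
          rw [h_t1]; exact add_le_add le_rfl hG_lb
  have R4 : (T/2) ^ (α - 1) * (t - L) + C * (α * T) ^ (2 - α) / (2 - α)
      ≤ 3 * (2:ℝ) ^ (-(k:ℝ) * α + (k:ℝ) - (m:ℝ)) := by
    set X : ℝ := (2:ℝ) ^ (-(k:ℝ) * α + (k:ℝ) - (m:ℝ)) with hXdef
    set Y : ℝ := (2:ℝ) ^ (-(k:ℝ) * α - (a:ℝ)) with hYdef
    have hXY : Y ≤ X := hle2 _ _ (by linarith)
    have hT2 : T/2 = (2:ℝ) ^ (-(k:ℝ) + -1) := by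
      rw [hTr, Real.rpow_add h2p, h2neg1]
      ring
    have hb1 : (T/2) ^ (α - 1) * (t - L) ≤ 2 * X := by
      have h1 : t - L ≤ M2 := by rw [etL]; linarith [(mul_pos hα0 hT0)]
      have h0 : (0:ℝ) ≤ (T/2) ^ (α - 1) := Real.rpow_nonneg (by linarith) _
      calc (T/2) ^ (α - 1) * (t - L) ≤ (T/2) ^ (α - 1) * M2 :=
            mul_le_mul_of_nonneg_left h1 h0
        _ = (2:ℝ)^((-(k:ℝ) + -1)*(α-1)) * (2:ℝ)^(-(m:ℝ)) := by
            rw [hT2, ← Real.rpow_mul (by norm_num), hMr]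
        _ = (2:ℝ)^((-(k:ℝ) + -1)*(α-1) + -(m:ℝ)) := (Real.rpow_add h2p _ _).symm
        _ ≤ (2:ℝ)^(1 + (-(k:ℝ) * α + (k:ℝ) - (m:ℝ))) := hle2 _ _ (by ring_nf; linarith [hα0])
        _ = 2 * X := by rw [Real.rpow_add h2p, Real.rpow_one]
    have hb2 : C * (α * T) ^ (2 - α) / (2 - α) ≤ X := by
      rw [hσ2]
      have hden2 : (0:ℝ) < α*(3/2) := by nlinarith
      have hden3 : α*(3/2) ≤ α*(2-α) := by nlinarith
      have hd1 : (2:ℝ)^(-(k:ℝ)*α - 2*(a:ℝ) + (a:ℝ)*α) / (α*(2-α))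
          ≤ (2:ℝ)^(-(k:ℝ)*α - 2*(a:ℝ) + (a:ℝ)*α) / (α*(3/2)) :=
        div_le_div_of_nonneg_left (h2pos _).le hden2 hden3
      refine le_trans hd1 ?_
      have e4 : (2:ℝ)^(-(k:ℝ)*α - 2*(a:ℝ) + (a:ℝ)*α) / (α*(3/2))
          = (2/3) * (2:ℝ)^(-(k:ℝ)*α - 2*(a:ℝ) + (a:ℝ)*α - -(a:ℝ)) := by
        rw [Real.rpow_sub h2p, ← hαr]; ring
      rw [e4]
      calc (2/3) * (2:ℝ)^(-(k:ℝ)*α - 2*(a:ℝ) + (a:ℝ)*α - -(a:ℝ))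
          ≤ (2/3) * (2:ℝ)^((1:ℝ)/2 + (-(k:ℝ)*α - (a:ℝ))) := by
            have := hle2 (-(k:ℝ)*α - 2*(a:ℝ) + (a:ℝ)*α - -(a:ℝ))
              ((1:ℝ)/2 + (-(k:ℝ)*α - (a:ℝ))) (by ring_nf; linarith [haα])
            linarith
        _ = (2/3) * ((2:ℝ)^((1:ℝ)/2) * Y) := by rw [Real.rpow_add h2p]
        _ ≤ (2/3) * ((3/2) * Y) := by
            have hY0 : (0:ℝ) < Y := h2pos _
            have h5 := mul_le_mul_of_nonneg_right hsqrt hY0.le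
            linarith
        _ = Y := by ring
        _ ≤ X := hXY
    linarith
  have hnn1 : 0 ≤ T ^ (1 - α) * (t - L) := mul_nonneg (Real.rpow_nonneg hT0.le _) htL
  have hnn2 : 0 ≤ T ^ (α - 1) * (t - L) := mul_nonneg (Real.rpow_nonneg hT0.le _) htL
  have hnn3 : 0 ≤ (T/2) ^ (α - 1) * (t - L) :=
    mul_nonneg (Real.rpow_nonneg (by linarith) _) htL
  have hnn4 : 0 ≤ C * (α * T) ^ (2 - α) / (2 - α) :=
    div_nonneg (mul_nonneg hC0.le (Real.rpow_nonneg (by positivity) _)) (by linarith)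
  refine ⟨⟨?_, ?_⟩, ?_, ?_⟩
  · -- w lower
    rw [hsplit]
    calc ENNReal.ofReal (1/2 * (2:ℝ) ^ (-(k:ℝ) * (2 - α)))
        ≤ ENNReal.ofReal (C⁻¹ * (α * T) ^ α / α) := ENNReal.ofReal_le_ofReal R1
      _ = ∫⁻ x in Set.Ico t T, ENNReal.ofReal ((lacWeight a x)⁻¹) := hWsing_eq.symm
      _ ≤ _ := le_add_self
  · -- w upper
    rw [hsplit]
    calc (∫⁻ x in Set.Ico L t, ENNReal.ofReal ((lacWeight a x)⁻¹))
          + ∫⁻ x in Set.Ico t T, ENNReal.ofReal ((lacWeight a x)⁻¹)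
        ≤ ENNReal.ofReal (T ^ (1 - α) * (t - L)) + ENNReal.ofReal (C⁻¹ * (α * T) ^ α / α) :=
          add_le_add hWmid_le (le_of_eq hWsing_eq)
      _ = ENNReal.ofReal (T ^ (1 - α) * (t - L) + C⁻¹ * (α * T) ^ α / α) :=
          (ENNReal.ofReal_add hnn1 (div_nonneg (mul_nonneg (inv_nonneg.mpr hC0.le)
            (Real.rpow_nonneg (by positivity) _)) hα0.le)).symm
      _ ≤ ENNReal.ofReal (3 * (2:ℝ) ^ (-(k:ℝ) * (2 - α))) := ENNReal.ofReal_le_ofReal R2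
  · -- σ lower
    rw [hsplit]
    calc ENNReal.ofReal (1/2 * (2:ℝ) ^ (-(k:ℝ) * α + (k:ℝ) - (m:ℝ)))
        ≤ ENNReal.ofReal (T ^ (α - 1) * (t - L) + C * (α * T) ^ (2 - α) / (2 - α)) :=
          ENNReal.ofReal_le_ofReal R3
      _ = ENNReal.ofReal (T ^ (α - 1) * (t - L))
            + ENNReal.ofReal (C * (α * T) ^ (2 - α) / (2 - α)) :=
          ENNReal.ofReal_add hnn2 hnn4
      _ ≤ _ := add_le_add hσmid_ge (le_of_eq hσsing_eq.symm)
  · -- σ upper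
    rw [hsplit]
    calc (∫⁻ x in Set.Ico L t, ENNReal.ofReal (lacWeight a x))
          + ∫⁻ x in Set.Ico t T, ENNReal.ofReal (lacWeight a x)
        ≤ ENNReal.ofReal ((T/2) ^ (α - 1) * (t - L))
            + ENNReal.ofReal (C * (α * T) ^ (2 - α) / (2 - α)) :=
          add_le_add hσmid_le (le_of_eq hσsing_eq)
      _ = ENNReal.ofReal ((T/2) ^ (α - 1) * (t - L) + C * (α * T) ^ (2 - α) / (2 - α)) :=
          (ENNReal.ofReal_add hnn3 hnn4).symm
      _ ≤ ENNReal.ofReal (3 * (2:ℝ) ^ (-(k:ℝ) * α + (k:ℝ) - (m:ℝ))) :=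
          ENNReal.ofReal_le_ofReal R4
end
end

section
/- There exist an absolute constant c > 0 and an integer a₀ ≥ 1 such that for every integer a ≥ a₀ (with α = 2^{−a}, σ, w the lacunary weights constructed from a, and S := {[2^{−k} − 2^{−j}, 2^{−k}) : k, j integers, k ≥ 1, j ≥ a + k}), one has ‖𝒜*_S(σ·1_{[0,1)})‖_{L²(w)} ≥ c·α^{−2}·‖σ·1_{[0,1)}‖_{L²(w)}. In particular ‖𝒜*_S‖_{L²(w)→L²(w)} ≥ c·α^{−2}. -/
open MeasureTheory Set Filter
open scoped ENNReal NNReal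

noncomputable section

/-- The sparse family `{B_{k,j} = [2^{-k} - 2^{-j}, 2^{-k}) : k ≥ 1, j ≥ a + k}` associated
with the lacunary weight. -/
def lacFamily (a : ℕ) : Set (ℝ × ℝ) :=
  {p : ℝ × ℝ | ∃ k j : ℕ, 1 ≤ k ∧ a + k ≤ j ∧
    p = ((2 : ℝ) ^ (-(k : ℤ)) - (2 : ℝ) ^ (-(j : ℤ)), (2 : ℝ) ^ (-(k : ℤ)))}

namespace Lac

/-! ### Basic facts about `α = 2^{-a}` -/

def al (a : ℕ) : ℝ := (2 : ℝ) ^ (-(a : ℤ))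

lemma al_pos (a : ℕ) : 0 < al a := zpow_pos (by norm_num) _

lemma rz (n : ℤ) : (2:ℝ) ^ (n:ℝ) = (2:ℝ) ^ n := Real.rpow_intCast 2 n

lemma al_le (a : ℕ) (ha : 4 ≤ a) : al a ≤ 1/16 := by
  have h : ((-(a:ℤ))) ≤ (-4 : ℤ) := by omega
  calc al a ≤ (2:ℝ) ^ (-4 : ℤ) := zpow_le_zpow_right₀ (by norm_num) h
    _ = 1/16 := by norm_num

lemma al_le_one (a : ℕ) : al a ≤ 1 := by
  have h : ((-(a:ℤ))) ≤ (0 : ℤ) := by omega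
  calc al a ≤ (2:ℝ) ^ (0 : ℤ) := zpow_le_zpow_right₀ (by norm_num) h
    _ = 1 := by norm_num

lemma al_inv (a : ℕ) : (al a)⁻¹ = (2:ℝ) ^ (a : ℕ) := by
  rw [al, zpow_neg, inv_inv, zpow_natCast]

lemma mul_al_le_one (a : ℕ) : (a : ℝ) * al a ≤ 1 := by
  have h : (a : ℝ) ≤ 2 ^ (a : ℕ) := by exact_mod_cast (Nat.lt_two_pow_self (n := a)).le
  have h2 : al a = ((2:ℝ) ^ (a:ℕ))⁻¹ := by rw [al, zpow_neg, zpow_natCast]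
  rw [h2, mul_inv_le_iff₀ (by positivity), one_mul]
  exact h

lemma rp_pos (u : ℝ) : 0 < (2:ℝ) ^ u := Real.rpow_pos_of_pos (by norm_num) u

lemma rp_add (u v : ℝ) : (2:ℝ) ^ (u + v) = 2 ^ u * 2 ^ v := Real.rpow_add (by norm_num) u v

lemma rp_mono {u v : ℝ} (h : u ≤ v) : (2:ℝ) ^ u ≤ 2 ^ v :=
  (Real.rpow_le_rpow_left_iff (by norm_num)).mpr h

lemma zpow_rpow (n : ℤ) (c : ℝ) : ((2:ℝ) ^ n) ^ c = (2:ℝ) ^ ((n:ℝ) * c) := by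
  rw [← rz n, ← Real.rpow_mul (by norm_num)]

lemma al_rpow (a : ℕ) (c : ℝ) : (al a) ^ c = (2:ℝ) ^ (-(a:ℝ) * c) := by
  rw [al, zpow_rpow]; norm_num

lemma al_neg_al_le (a : ℕ) : (al a) ^ (-(al a)) ≤ 2 := by
  rw [al_rpow]
  calc (2:ℝ) ^ (-(a:ℝ) * -(al a)) = 2 ^ ((a:ℝ) * al a) := by ring_nf
    _ ≤ 2 ^ (1:ℝ) := rp_mono (mul_al_le_one a)
    _ = 2 := Real.rpow_one 2

/-! ### Dyadic block decomposition and evaluation of `lacWeight` -/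

lemma ceil_log (k : ℕ) (x : ℝ) (h1 : (2:ℝ) ^ (-(k:ℤ) - 1) ≤ x) (h2 : x < (2:ℝ) ^ (-(k:ℤ))) :
    ⌈-Real.logb 2 x⌉ = (k : ℤ) + 1 := by
  have hx : 0 < x := lt_of_lt_of_le (zpow_pos (by norm_num) _) h1
  rw [Int.ceil_eq_iff]
  constructor
  · have h : Real.logb 2 x < -(k:ℝ) := by
      rw [Real.logb_lt_iff_lt_rpow (by norm_num) hx]
      rw [show (-(k:ℝ)) = ((-(k:ℤ) : ℤ) : ℝ) by push_cast; ring, rz]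
      exact h2
    push_cast; linarith
  · have h : -(k:ℝ) - 1 ≤ Real.logb 2 x := by
      rw [Real.le_logb_iff_rpow_le (by norm_num) hx]
      rw [show (-(k:ℝ) - 1) = ((-(k:ℤ) - 1 : ℤ) : ℝ) by push_cast; ring, rz]
      exact h1
    push_cast; linarith

lemma exists_block (x : ℝ) (hx0 : 0 < x) (hx1 : x < 1) :
    ∃ k : ℕ, (2:ℝ) ^ (-(k:ℤ) - 1) ≤ x ∧ x < (2:ℝ) ^ (-(k:ℤ)) := by
  have hlog : Real.logb 2 x < 0 := Real.logb_neg (by norm_num) hx0 hx1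
  set n : ℤ := ⌈-Real.logb 2 x⌉ with hn
  have hn1 : 1 ≤ n := by
    have h0 : (0:ℝ) < -Real.logb 2 x := by linarith
    have := Int.lt_ceil.mpr (show ((0:ℤ):ℝ) < -Real.logb 2 x by exact_mod_cast h0)
    omega
  have hk : ((((n-1).toNat : ℕ) : ℤ)) = n - 1 := Int.toNat_of_nonneg (by omega)
  refine ⟨(n - 1).toNat, ?_, ?_⟩
  · have h := Int.le_ceil (-Real.logb 2 x)
    rw [← hn] at h
    have h' : (2:ℝ) ^ ((-n : ℤ) : ℝ) ≤ x := by
      rw [← Real.le_logb_iff_rpow_le (by norm_num) hx0]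
      push_cast; linarith
    rw [rz] at h'
    rw [hk]
    calc (2:ℝ) ^ (-(n-1) - 1) = (2:ℝ) ^ (-n) := by ring_nf
      _ ≤ x := h'
  · have h : ((n:ℝ)) - 1 < -Real.logb 2 x := by
      have := Int.ceil_lt_add_one (-Real.logb 2 x)
      rw [← hn] at this; linarith
    have h' : x < (2:ℝ) ^ ((-(n-1) : ℤ) : ℝ) := by
      rw [← Real.logb_lt_iff_lt_rpow (by norm_num) hx0]
      push_cast; linarith
    rw [rz] at h'
    rw [hk]
    exact h'

lemma block_lt_half (k : ℕ) (hk : 1 ≤ k) : (2:ℝ) ^ (-(k:ℤ)) ≤ 1/2 := by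
  have h : ((-(k:ℤ))) ≤ (-1 : ℤ) := by omega
  calc (2:ℝ) ^ (-(k:ℤ)) ≤ (2:ℝ) ^ (-1 : ℤ) := zpow_le_zpow_right₀ (by norm_num) h
    _ = 1/2 := by norm_num

lemma two_zpow_succ (n : ℤ) : (2:ℝ) * (2:ℝ) ^ (n - 1) = (2:ℝ) ^ n := by
  rw [show n = (n - 1) + 1 by ring, zpow_add₀ (by norm_num : (2:ℝ) ≠ 0)]
  ring

lemma lac_eval (a k : ℕ) (hk : 1 ≤ k) (x : ℝ)
    (h1 : (2:ℝ) ^ (-(k:ℤ) - 1) ≤ x) (h2 : x < (2:ℝ) ^ (-(k:ℤ))) :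
    lacWeight a x =
      (if x < (1 + al a) * (2:ℝ) ^ (-(k:ℤ) - 1) then
        (2:ℝ) ^ (2 * (k:ℝ) * (1 - al a)) / al a * (x - (2:ℝ) ^ (-(k:ℤ) - 1)) ^ (1 - al a)
      else if x < (1 - al a) * (2:ℝ) ^ (-(k:ℤ)) then x ^ (al a - 1)
      else (2:ℝ) ^ (2 * (k:ℝ) * (1 - al a)) / al a * ((2:ℝ) ^ (-(k:ℤ)) - x) ^ (1 - al a)) := by
  have hx : 0 < x := lt_of_lt_of_le (zpow_pos (by norm_num) _) h1
  have habs : |x| = x := abs_of_pos hx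
  have hhalf : x < 1/2 := lt_of_lt_of_le h2 (block_lt_half k hk)
  unfold lacWeight
  simp only [habs]
  rw [if_neg (ne_of_gt hx), if_neg (not_le.mpr hhalf)]
  have e1 : (⌈-Real.logb 2 x⌉ - 1 : ℤ) = (k:ℤ) := by rw [ceil_log k x h1 h2]; ring
  rw [e1]
  have e2 : (-((k:ℤ) + 1)) = -(k:ℤ) - 1 := by ring
  rw [e2]
  rfl

lemma lac_left (a k : ℕ) (hk : 1 ≤ k) (x : ℝ)
    (h1 : (2:ℝ) ^ (-(k:ℤ) - 1) ≤ x) (h2 : x < (1 + al a) * (2:ℝ) ^ (-(k:ℤ) - 1)) :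
    lacWeight a x
      = (2:ℝ) ^ (2 * (k:ℝ) * (1 - al a)) / al a * (x - (2:ℝ) ^ (-(k:ℤ) - 1)) ^ (1 - al a) := by
  have hp : (0:ℝ) < (2:ℝ) ^ (-(k:ℤ) - 1) := zpow_pos (by norm_num) _
  have h2' : x < (2:ℝ) ^ (-(k:ℤ)) := by
    have h3 : (1 + al a) * (2:ℝ) ^ (-(k:ℤ) - 1) ≤ 2 * (2:ℝ) ^ (-(k:ℤ) - 1) := by
      have := al_le_one a; nlinarith
    have he : (2:ℝ) * (2:ℝ) ^ (-(k:ℤ) - 1) = (2:ℝ) ^ (-(k:ℤ)) := two_zpow_succ _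
    linarith
  rw [lac_eval a k hk x h1 h2', if_pos h2]

lemma lac_mid (a k : ℕ) (hk : 1 ≤ k) (x : ℝ)
    (h1 : (1 + al a) * (2:ℝ) ^ (-(k:ℤ) - 1) ≤ x) (h2 : x < (1 - al a) * (2:ℝ) ^ (-(k:ℤ))) :
    lacWeight a x = x ^ (al a - 1) := by
  have hp : (0:ℝ) < (2:ℝ) ^ (-(k:ℤ) - 1) := zpow_pos (by norm_num) _
  have hp0 : (0:ℝ) < (2:ℝ) ^ (-(k:ℤ)) := zpow_pos (by norm_num) _
  have ha := al_pos a
  have h1' : (2:ℝ) ^ (-(k:ℤ) - 1) ≤ x := by nlinarith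
  have h2' : x < (2:ℝ) ^ (-(k:ℤ)) := by nlinarith
  rw [lac_eval a k hk x h1' h2', if_neg (not_lt.mpr h1), if_pos h2]

lemma lac_outer (a k : ℕ) (hk : 1 ≤ k) (ha : 4 ≤ a) (x : ℝ)
    (h1 : (1 - al a) * (2:ℝ) ^ (-(k:ℤ)) ≤ x) (h2 : x < (2:ℝ) ^ (-(k:ℤ))) :
    lacWeight a x
      = (2:ℝ) ^ (2 * (k:ℝ) * (1 - al a)) / al a * ((2:ℝ) ^ (-(k:ℤ)) - x) ^ (1 - al a) := by
  have hp0 : (0:ℝ) < (2:ℝ) ^ (-(k:ℤ)) := zpow_pos (by norm_num) _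
  have ha16 := al_le a ha
  have ha0 := al_pos a
  have he : (2:ℝ) * (2:ℝ) ^ (-(k:ℤ) - 1) = (2:ℝ) ^ (-(k:ℤ)) := two_zpow_succ _
  have h1' : (2:ℝ) ^ (-(k:ℤ) - 1) ≤ x := by nlinarith
  have hno1 : ¬ (x < (1 + al a) * (2:ℝ) ^ (-(k:ℤ) - 1)) := by
    push_neg
    have h3 : (1 + al a) * (2:ℝ) ^ (-(k:ℤ) - 1) ≤ (1 - al a) * (2:ℝ) ^ (-(k:ℤ)) := by nlinarith
    linarith
  rw [lac_eval a k hk x h1' h2, if_neg hno1, if_neg (not_lt.mpr h1)]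

lemma lac_tail (a : ℕ) (x : ℝ) (h1 : (1:ℝ)/2 ≤ x) : lacWeight a x = x ^ (al a - 1) := by
  have hx : 0 < x := by linarith
  have habs : |x| = x := abs_of_pos hx
  unfold lacWeight
  simp only [habs]
  rw [if_neg (ne_of_gt hx), if_pos h1]
  rfl

/-! ### Pointwise upper and lower bounds on blocks -/

lemma lac_block_le (a k : ℕ) (ha : 4 ≤ a) (hk : 1 ≤ k) (x : ℝ)
    (h1 : (2:ℝ) ^ (-(k:ℤ) - 1) ≤ x) (h2 : x < (2:ℝ) ^ (-(k:ℤ))) :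
    lacWeight a x ≤ 2 * (2:ℝ) ^ ((k:ℝ) * (1 - al a)) := by
  have ha0 := al_pos a
  have ha1 := al_le_one a
  have hB0 : (0:ℝ) ≤ 1 - al a := by linarith
  have hp1 : (0:ℝ) < (2:ℝ) ^ (-(k:ℤ) - 1) := zpow_pos (by norm_num) _
  have hp0 : (0:ℝ) < (2:ℝ) ^ (-(k:ℤ)) := zpow_pos (by norm_num) _
  have hx : 0 < x := lt_of_lt_of_le hp1 h1
  have hC : (0:ℝ) < (2:ℝ) ^ (2 * (k:ℝ) * (1 - al a)) / al a := by positivity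
  rcases lt_or_ge x ((1 + al a) * (2:ℝ) ^ (-(k:ℤ) - 1)) with hL | h'
  · rw [lac_left a k hk x h1 hL]
    have ht0 : 0 ≤ x - (2:ℝ) ^ (-(k:ℤ) - 1) := by linarith
    have ht1 : x - (2:ℝ) ^ (-(k:ℤ) - 1) ≤ al a * (2:ℝ) ^ (-(k:ℤ) - 1) := by nlinarith
    have hstep : (x - (2:ℝ) ^ (-(k:ℤ) - 1)) ^ (1 - al a)
        ≤ (al a * (2:ℝ) ^ (-(k:ℤ) - 1)) ^ (1 - al a) :=
      Real.rpow_le_rpow ht0 ht1 hB0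
    calc (2:ℝ) ^ (2 * (k:ℝ) * (1 - al a)) / al a * (x - (2:ℝ) ^ (-(k:ℤ) - 1)) ^ (1 - al a)
        ≤ (2:ℝ) ^ (2 * (k:ℝ) * (1 - al a)) / al a
            * (al a * (2:ℝ) ^ (-(k:ℤ) - 1)) ^ (1 - al a) :=
          mul_le_mul_of_nonneg_left hstep (le_of_lt hC)
      _ = (al a) ^ (-(al a)) * (2:ℝ) ^ (2 * (k:ℝ) * (1 - al a) + (-(k:ℝ) - 1) * (1 - al a)) := by
          rw [Real.mul_rpow (le_of_lt ha0) (le_of_lt hp1), zpow_rpow, rp_add]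
          rw [div_eq_mul_inv]
          rw [show ((al a) ^ (-(al a)) : ℝ) = (al a) ^ (1 - al a) * (al a)⁻¹ by
            rw [← Real.rpow_neg_one (al a), ← Real.rpow_add ha0]; ring_nf]
          push_cast
          ring
      _ ≤ 2 * (2:ℝ) ^ ((k:ℝ) * (1 - al a)) := by
          have h2' : (2:ℝ) ^ (2 * (k:ℝ) * (1 - al a) + (-(k:ℝ) - 1) * (1 - al a))
              ≤ (2:ℝ) ^ ((k:ℝ) * (1 - al a)) := rp_mono (by nlinarith)
          have := al_neg_al_le a
          nlinarith [rp_pos ((k:ℝ) * (1 - al a)),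
            rp_pos (2 * (k:ℝ) * (1 - al a) + (-(k:ℝ) - 1) * (1 - al a)),
            Real.rpow_nonneg (le_of_lt ha0) (-(al a))]
  rcases lt_or_ge x ((1 - al a) * (2:ℝ) ^ (-(k:ℤ))) with hM | h''
  · rw [lac_mid a k hk x h' hM]
    calc x ^ (al a - 1) ≤ ((2:ℝ) ^ (-(k:ℤ) - 1)) ^ (al a - 1) :=
          Real.rpow_le_rpow_of_nonpos hp1 h1 (by linarith)
      _ = (2:ℝ) ^ ((-(k:ℝ) - 1) * (al a - 1)) := by rw [zpow_rpow]; push_cast; ring_nf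
      _ ≤ 2 * (2:ℝ) ^ ((k:ℝ) * (1 - al a)) := by
          rw [show ((-(k:ℝ) - 1) * (al a - 1)) = (1 - al a) + (k:ℝ) * (1 - al a) by ring, rp_add]
          have h21 : (2:ℝ) ^ (1 - al a) ≤ 2 := by
            calc (2:ℝ) ^ (1 - al a) ≤ 2 ^ (1:ℝ) := rp_mono (by linarith)
              _ = 2 := Real.rpow_one 2
          nlinarith [rp_pos ((k:ℝ) * (1 - al a)), rp_pos (1 - al a)]
  · rw [lac_outer a k hk ha x h'' h2]
    have ht0 : 0 ≤ (2:ℝ) ^ (-(k:ℤ)) - x := by linarith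
    have ht1 : (2:ℝ) ^ (-(k:ℤ)) - x ≤ al a * (2:ℝ) ^ (-(k:ℤ)) := by nlinarith
    have hstep : ((2:ℝ) ^ (-(k:ℤ)) - x) ^ (1 - al a) ≤ (al a * (2:ℝ) ^ (-(k:ℤ))) ^ (1 - al a) :=
      Real.rpow_le_rpow ht0 ht1 hB0
    calc (2:ℝ) ^ (2 * (k:ℝ) * (1 - al a)) / al a * ((2:ℝ) ^ (-(k:ℤ)) - x) ^ (1 - al a)
        ≤ (2:ℝ) ^ (2 * (k:ℝ) * (1 - al a)) / al a * (al a * (2:ℝ) ^ (-(k:ℤ))) ^ (1 - al a) :=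
          mul_le_mul_of_nonneg_left hstep (le_of_lt hC)
      _ = (al a) ^ (-(al a)) * (2:ℝ) ^ (2 * (k:ℝ) * (1 - al a) + (-(k:ℝ)) * (1 - al a)) := by
          rw [Real.mul_rpow (le_of_lt ha0) (le_of_lt hp0), zpow_rpow, rp_add]
          rw [div_eq_mul_inv]
          rw [show ((al a) ^ (-(al a)) : ℝ) = (al a) ^ (1 - al a) * (al a)⁻¹ by
            rw [← Real.rpow_neg_one (al a), ← Real.rpow_add ha0]; ring_nf]
          push_cast
          ring
      _ ≤ 2 * (2:ℝ) ^ ((k:ℝ) * (1 - al a)) := by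
          have h2' : (2:ℝ) ^ (2 * (k:ℝ) * (1 - al a) + (-(k:ℝ)) * (1 - al a))
              ≤ (2:ℝ) ^ ((k:ℝ) * (1 - al a)) := rp_mono (by nlinarith)
          have := al_neg_al_le a
          nlinarith [rp_pos ((k:ℝ) * (1 - al a)),
            rp_pos (2 * (k:ℝ) * (1 - al a) + (-(k:ℝ)) * (1 - al a)),
            Real.rpow_nonneg (le_of_lt ha0) (-(al a))]

lemma lac_block_le' (a k : ℕ) (ha : 4 ≤ a) (x : ℝ)
    (h1 : (2:ℝ) ^ (-(k:ℤ) - 1) ≤ x) (h2 : x < (2:ℝ) ^ (-(k:ℤ))) :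
    lacWeight a x ≤ 2 * (2:ℝ) ^ ((k:ℝ) * (1 - al a)) := by
  rcases Nat.eq_zero_or_pos k with hk | hk
  · subst hk
    have h1' : (1:ℝ)/2 ≤ x := by
      have he : (2:ℝ) ^ (-((0:ℕ):ℤ) - 1) = 1/2 := by norm_num
      rw [he] at h1; exact h1
    rw [lac_tail a x h1']
    have ha0 := al_pos a
    have ha1 := al_le_one a
    calc x ^ (al a - 1) ≤ ((1:ℝ)/2) ^ (al a - 1) :=
          Real.rpow_le_rpow_of_nonpos (by norm_num) h1' (by linarith)
      _ = (2:ℝ) ^ ((-1:ℝ) * (al a - 1)) := by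
          rw [show ((1:ℝ)/2) = (2:ℝ) ^ (-1 : ℤ) by norm_num, zpow_rpow]; norm_num
      _ ≤ 2 * (2:ℝ) ^ ((0:ℝ) * (1 - al a)) := by
          rw [show ((0:ℝ) * (1 - al a)) = 0 by ring, Real.rpow_zero, mul_one]
          calc (2:ℝ) ^ ((-1:ℝ) * (al a - 1)) ≤ (2:ℝ) ^ (1:ℝ) := rp_mono (by nlinarith)
            _ = 2 := Real.rpow_one 2
      _ = 2 * (2:ℝ) ^ (((0:ℕ):ℝ) * (1 - al a)) := by norm_num
  · exact lac_block_le a k ha hk x h1 h2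

lemma lac_mid_ge (a l : ℕ) (x : ℝ) (hx0 : 0 < x) (hxle : x ≤ (2:ℝ) ^ (-(l:ℤ))) :
    (2:ℝ) ^ ((l:ℝ) * (1 - al a)) ≤ x ^ (al a - 1) := by
  have h := Real.rpow_le_rpow_of_nonpos hx0 hxle
    (by linarith [al_pos a, al_le_one a] : al a - 1 ≤ 0)
  calc (2:ℝ) ^ ((l:ℝ) * (1 - al a)) = ((2:ℝ) ^ (-(l:ℤ))) ^ (al a - 1) := by
        rw [zpow_rpow]; push_cast; ring_nf
    _ ≤ x ^ (al a - 1) := h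

lemma lac_nonneg_on (a : ℕ) (ha : 4 ≤ a) (x : ℝ) (hx0 : 0 < x) (hx1 : x < 1) :
    0 ≤ lacWeight a x := by
  rcases le_or_gt (1/2 : ℝ) x with h | h
  · rw [lac_tail a x h]; exact Real.rpow_nonneg (le_of_lt hx0) _
  · obtain ⟨k, hk1, hk2⟩ := exists_block x hx0 hx1
    have hk : 1 ≤ k := by
      by_contra hc
      have hk0 : k = 0 := by omega
      subst hk0
      have : (2:ℝ) ^ (-(0:ℕ):ℤ) = 1 := by norm_num
      have h1 : (2:ℝ) ^ (-((0:ℕ):ℤ) - 1) = 1/2 := by norm_num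
      rw [h1] at hk1
      linarith
    have ha0 := al_pos a
    have hC : (0:ℝ) ≤ (2:ℝ) ^ (2 * (k:ℝ) * (1 - al a)) / al a := by positivity
    rcases lt_or_ge x ((1 + al a) * (2:ℝ) ^ (-(k:ℤ) - 1)) with hL | h'
    · rw [lac_left a k hk x hk1 hL]
      exact mul_nonneg hC (Real.rpow_nonneg (by linarith) _)
    rcases lt_or_ge x ((1 - al a) * (2:ℝ) ^ (-(k:ℤ))) with hM | h''
    · rw [lac_mid a k hk x h' hM]
      exact Real.rpow_nonneg (le_of_lt hx0) _
    · rw [lac_outer a k hk ha x h'' hk2]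
      exact mul_nonneg hC (Real.rpow_nonneg (by linarith) _)

end Lac
namespace Lac

/-! ### Upper bound for the mass of `σ` on `[0,1)` -/

lemma one_sub_geom (a : ℕ) (ha : 4 ≤ a) : al a / 3 ≤ 1 - (2:ℝ) ^ (-(al a)) := by
  have ha0 := al_pos a
  have h16 := al_le a ha
  have hlog2 : (0.6931471803 : ℝ) < Real.log 2 := Real.log_two_gt_d9
  have hlog2' : Real.log 2 < 0.6931471808 := Real.log_two_lt_d9
  have hexp : al a * Real.log 2 + 1 ≤ Real.exp (al a * Real.log 2) := Real.add_one_le_exp _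
  have hrval : (2:ℝ) ^ (-(al a)) = (Real.exp (al a * Real.log 2))⁻¹ := by
    rw [Real.rpow_def_of_pos (by norm_num : (0:ℝ) < 2), ← Real.exp_neg]
    ring_nf
  have hpos : 0 < al a * Real.log 2 + 1 := by nlinarith
  have hr1 : (2:ℝ) ^ (-(al a)) ≤ (al a * Real.log 2 + 1)⁻¹ := by
    rw [hrval]
    have h := one_div_le_one_div_of_le hpos hexp
    simpa [one_div] using h
  have hr2 : (al a * Real.log 2 + 1)⁻¹ ≤ 1 - al a / 3 := by
    rw [inv_eq_one_div, div_le_iff₀ hpos]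
    nlinarith [mul_le_mul_of_nonneg_left h16 ha0.le]
  linarith

lemma geom_le (a : ℕ) (ha : 4 ≤ a) :
    (∑' k : ℕ, ENNReal.ofReal ((2:ℝ) ^ (-(k:ℝ) * al a))) ≤ ENNReal.ofReal (3 / al a) := by
  have ha0 := al_pos a
  set r : ℝ := (2:ℝ) ^ (-(al a)) with hr
  have hr0 : (0:ℝ) ≤ r := le_of_lt (rp_pos _)
  have hterm : ∀ k : ℕ, (2:ℝ) ^ (-(k:ℝ) * al a) = r ^ k := by
    intro k
    rw [hr, ← Real.rpow_natCast ((2:ℝ) ^ (-(al a))) k, ← Real.rpow_mul (by norm_num)]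
    ring_nf
  have hsum : (∑' k : ℕ, ENNReal.ofReal ((2:ℝ) ^ (-(k:ℝ) * al a)))
      = (1 - ENNReal.ofReal r)⁻¹ := by
    rw [tsum_congr (fun k => by rw [hterm k, ENNReal.ofReal_pow hr0])]
    exact ENNReal.tsum_geometric _
  rw [hsum]
  have hkey : al a / 3 ≤ 1 - r := one_sub_geom a ha
  have h1r : (1 : ℝ≥0∞) - ENNReal.ofReal r = ENNReal.ofReal (1 - r) := by
    rw [ENNReal.ofReal_sub 1 hr0, ENNReal.ofReal_one]
  rw [h1r, ← ENNReal.ofReal_inv_of_pos (by linarith : (0:ℝ) < 1 - r)]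
  apply ENNReal.ofReal_le_ofReal
  rw [show (3 : ℝ)/al a = ((al a)/3)⁻¹ by rw [inv_div]]
  have h := one_div_le_one_div_of_le (by positivity : (0:ℝ) < al a / 3) hkey
  simpa [one_div] using h

lemma integral_upper (a : ℕ) (ha : 4 ≤ a) :
    ∫⁻ x in Set.Ico (0:ℝ) 1, ENNReal.ofReal (lacWeight a x) ≤ ENNReal.ofReal (3 / al a) := by
  have h1 : ∫⁻ x in Set.Ico (0:ℝ) 1, ENNReal.ofReal (lacWeight a x)
      = ∫⁻ x in Set.Ioo (0:ℝ) 1, ENNReal.ofReal (lacWeight a x) :=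
    (setLIntegral_congr Ioo_ae_eq_Ico).symm
  rw [h1]
  have hsub : Set.Ioo (0:ℝ) 1 ⊆ ⋃ k : ℕ, Set.Ico ((2:ℝ)^(-(k:ℤ)-1)) ((2:ℝ)^(-(k:ℤ))) := by
    intro x hx
    obtain ⟨k, hk1, hk2⟩ := exists_block x hx.1 hx.2
    exact Set.mem_iUnion.mpr ⟨k, hk1, hk2⟩
  calc ∫⁻ x in Set.Ioo (0:ℝ) 1, ENNReal.ofReal (lacWeight a x)
      ≤ ∫⁻ x in ⋃ k : ℕ, Set.Ico ((2:ℝ)^(-(k:ℤ)-1)) ((2:ℝ)^(-(k:ℤ))),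
          ENNReal.ofReal (lacWeight a x) := lintegral_mono_set hsub
    _ ≤ ∑' k : ℕ, ∫⁻ x in Set.Ico ((2:ℝ)^(-(k:ℤ)-1)) ((2:ℝ)^(-(k:ℤ))),
          ENNReal.ofReal (lacWeight a x) := lintegral_iUnion_le _ _
    _ ≤ ∑' k : ℕ, ENNReal.ofReal ((2:ℝ)^(-(k:ℝ) * al a)) := by
        apply ENNReal.tsum_le_tsum
        intro k
        calc ∫⁻ x in Set.Ico ((2:ℝ)^(-(k:ℤ)-1)) ((2:ℝ)^(-(k:ℤ))), ENNReal.ofReal (lacWeight a x)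
            ≤ ∫⁻ _ in Set.Ico ((2:ℝ)^(-(k:ℤ)-1)) ((2:ℝ)^(-(k:ℤ))),
                ENNReal.ofReal (2 * (2:ℝ)^((k:ℝ)*(1 - al a))) :=
              setLIntegral_mono' measurableSet_Ico
                (fun x hx => ENNReal.ofReal_le_ofReal (lac_block_le' a k ha x hx.1 hx.2))
          _ = ENNReal.ofReal (2 * (2:ℝ)^((k:ℝ)*(1 - al a)))
                * volume (Set.Ico ((2:ℝ)^(-(k:ℤ)-1)) ((2:ℝ)^(-(k:ℤ)))) := setLIntegral_const _ _
          _ ≤ ENNReal.ofReal ((2:ℝ)^(-(k:ℝ) * al a)) := by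
              rw [Real.volume_Ico, ← ENNReal.ofReal_mul (by positivity)]
              apply ENNReal.ofReal_le_ofReal
              have e : (2:ℝ)^(-(k:ℤ)) - (2:ℝ)^(-(k:ℤ)-1) = (2:ℝ)^(-(k:ℤ)-1) := by
                have := two_zpow_succ (-(k:ℤ)); linarith
              rw [e, ← rz (-(k:ℤ)-1)]
              have : (2:ℝ) * (2:ℝ)^((k:ℝ)*(1 - al a)) * (2:ℝ)^(((-(k:ℤ)-1 : ℤ)):ℝ)
                  = (2:ℝ)^((1:ℝ) + ((k:ℝ)*(1 - al a)) + ((-(k:ℤ)-1 : ℤ):ℝ)) := by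
                rw [rp_add, rp_add, Real.rpow_one]
              rw [this]
              apply rp_mono
              push_cast
              nlinarith [al_pos a]
    _ ≤ ENNReal.ofReal (3 / al a) := geom_le a ha

/-- the function `σ·1_{[0,1)}` -/
def ff (a : ℕ) : ℝ → ℝ := (Set.Ico (0:ℝ) 1).indicator (lacWeight a)

lemma integrand_eq (a : ℕ) :
    (fun x => ENNReal.ofReal (ff a x ^ 2) * ENNReal.ofReal ((lacWeight a x)⁻¹))
      = (Set.Ico (0:ℝ) 1).indicator (fun x => ENNReal.ofReal (lacWeight a x)) := by
  funext x
  by_cases hx : x ∈ Set.Ico (0:ℝ) 1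
  · rw [Set.indicator_of_mem hx, ff, Set.indicator_of_mem hx,
      ← ENNReal.ofReal_mul (sq_nonneg _)]
    congr 1
    by_cases h0 : lacWeight a x = 0
    · rw [h0]; norm_num
    · field_simp
  · rw [Set.indicator_of_notMem hx, ff, Set.indicator_of_notMem hx]
    norm_num

lemma L2w_ff (a : ℕ) :
    L2w (ff a) (fun x => (lacWeight a x)⁻¹)
      = (∫⁻ x in Set.Ico (0:ℝ) 1, ENNReal.ofReal (lacWeight a x)) ^ (1/2 : ℝ) := by
  rw [L2w]
  congr 1
  calc ∫⁻ x, ENNReal.ofReal (ff a x ^ 2) * ENNReal.ofReal ((lacWeight a x)⁻¹)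
      = ∫⁻ x, (Set.Ico (0:ℝ) 1).indicator (fun y => ENNReal.ofReal (lacWeight a y)) x := by
        rw [← integrand_eq a]
    _ = ∫⁻ x in Set.Ico (0:ℝ) 1, ENNReal.ofReal (lacWeight a x) :=
        lintegral_indicator measurableSet_Ico _

/-! ### Generic finite sums of indicators -/

lemma lintegral_sum_ind {ι : Type*} (s : Finset ι) (T : ι → Set ℝ) (c : ι → ℝ≥0∞)
    (hmeas : ∀ i ∈ s, MeasurableSet (T i)) (μ : Measure ℝ) :
    ∫⁻ x, (∑ i ∈ s, (T i).indicator (fun _ => c i) x) ∂μ = ∑ i ∈ s, c i * μ (T i) := by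
  rw [lintegral_finset_sum s (fun i hi => measurable_const.indicator (hmeas i hi))]
  apply Finset.sum_congr rfl
  intro i hi
  rw [lintegral_indicator (hmeas i hi)]
  exact setLIntegral_const _ _

lemma sum_ind_le {ι : Type*} (s : Finset ι) (T : ι → Set ℝ) (c : ι → ℝ≥0∞) (F : ℝ → ℝ≥0∞)
    (hdisj : ∀ i ∈ s, ∀ j ∈ s, i ≠ j → ∀ x, x ∈ T i → x ∈ T j → False)
    (hle : ∀ i ∈ s, ∀ x ∈ T i, c i ≤ F x) (x : ℝ) :
    (∑ i ∈ s, (T i).indicator (fun _ => c i) x) ≤ F x := by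
  by_cases hx : ∃ i ∈ s, x ∈ T i
  · obtain ⟨i0, hi0, hxi⟩ := hx
    have hz : ∀ j ∈ s, j ≠ i0 → (T j).indicator (fun _ => c j) x = 0 := by
      intro j hj hne
      exact Set.indicator_of_notMem (fun hxj => hdisj j hj i0 hi0 hne x hxj hxi) _
    rw [Finset.sum_eq_single_of_mem i0 hi0 hz, Set.indicator_of_mem hxi]
    exact hle i0 hi0 x hxi
  · push_neg at hx
    rw [Finset.sum_eq_zero (fun i hi => Set.indicator_of_notMem (hx i hi) _)]
    exact zero_le

end Lac
namespace Lac

/-! ### Lower bound for the mass of `σ` near the origin -/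

/-- middle piece of block `l` -/
def Pmid (a l : ℕ) : Set ℝ :=
  Set.Ioo ((1 + al a) * (2:ℝ)^(-(l:ℤ)-1)) ((1 - al a) * (2:ℝ)^(-(l:ℤ)))

lemma Pmid_sub_block (a l : ℕ) (ha : 4 ≤ a) :
    ∀ x ∈ Pmid a l, (2:ℝ)^(-(l:ℤ)-1) < x ∧ x < (2:ℝ)^(-(l:ℤ)) := by
  intro x hx
  have ha0 := al_pos a
  have ha1 := al_le_one a
  have hp1 : (0:ℝ) < (2:ℝ) ^ (-(l:ℤ) - 1) := zpow_pos (by norm_num) _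
  have hp0 : (0:ℝ) < (2:ℝ) ^ (-(l:ℤ)) := zpow_pos (by norm_num) _
  obtain ⟨hx1, hx2⟩ := hx
  constructor
  · nlinarith
  · nlinarith

lemma block_disj {l l' : ℕ} (hne : l ≠ l') (x : ℝ)
    (h1 : (2:ℝ)^(-(l:ℤ)-1) < x) (h2 : x < (2:ℝ)^(-(l:ℤ)))
    (h1' : (2:ℝ)^(-(l':ℤ)-1) < x) (h2' : x < (2:ℝ)^(-(l':ℤ))) : False := by
  rcases Nat.lt_or_ge l l' with h | h
  · have : (2:ℝ)^(-(l':ℤ)) ≤ (2:ℝ)^(-(l:ℤ)-1) :=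
      zpow_le_zpow_right₀ (by norm_num) (by omega)
    linarith
  · have hlt : l' < l := by omega
    have : (2:ℝ)^(-(l:ℤ)) ≤ (2:ℝ)^(-(l':ℤ)-1) :=
      zpow_le_zpow_right₀ (by norm_num) (by omega)
    linarith

lemma mass_lower (a : ℕ) (ha : 4 ≤ a) (k : ℕ) (hk : 1 ≤ k) :
    ENNReal.ofReal ((2:ℝ)^(-(k:ℝ) * al a) / (8 * al a))
      ≤ ∫⁻ x in Set.Ioo 0 ((2:ℝ)^(-(k:ℤ))), ENNReal.ofReal (lacWeight a x) := by
  have ha0 := al_pos a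
  have ha16 := al_le a ha
  set s : Finset ℕ := Finset.Ico k (k + 2^a) with hs
  set c : ℕ → ℝ≥0∞ := fun l => ENNReal.ofReal ((2:ℝ)^((l:ℝ)*(1 - al a))) with hc
  have hPm : ∀ l : ℕ, MeasurableSet (Pmid a l) := fun l => measurableSet_Ioo
  have hPsub : ∀ l ∈ s, Pmid a l ⊆ Set.Ioo 0 ((2:ℝ)^(-(k:ℤ))) := by
    intro l hl x hx
    obtain ⟨hb1, hb2⟩ := Pmid_sub_block a l ha x hx
    have hp1 : (0:ℝ) < (2:ℝ) ^ (-(l:ℤ) - 1) := zpow_pos (by norm_num) _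
    have hmem := Finset.mem_Ico.mp hl
    have : (2:ℝ)^(-(l:ℤ)) ≤ (2:ℝ)^(-(k:ℤ)) :=
      zpow_le_zpow_right₀ (by norm_num) (by omega)
    exact ⟨by linarith, by linarith⟩
  have hdisj : ∀ i ∈ s, ∀ j ∈ s, i ≠ j → ∀ x, x ∈ Pmid a i → x ∈ Pmid a j → False := by
    intro i _ j _ hne x hxi hxj
    obtain ⟨hi1, hi2⟩ := Pmid_sub_block a i ha x hxi
    obtain ⟨hj1, hj2⟩ := Pmid_sub_block a j ha x hxj
    exact block_disj hne x hi1 hi2 hj1 hj2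
  have hle : ∀ l ∈ s, ∀ x ∈ Pmid a l, c l ≤ ENNReal.ofReal (lacWeight a x) := by
    intro l hl x hx
    have hmem := Finset.mem_Ico.mp hl
    have hlk : 1 ≤ l := by omega
    obtain ⟨hb1, hb2⟩ := Pmid_sub_block a l ha x hx
    have hp1 : (0:ℝ) < (2:ℝ) ^ (-(l:ℤ) - 1) := zpow_pos (by norm_num) _
    rw [lac_mid a l hlk x (le_of_lt hx.1) hx.2]
    exact ENNReal.ofReal_le_ofReal (lac_mid_ge a l x (by linarith) (le_of_lt hb2))
  calc ENNReal.ofReal ((2:ℝ)^(-(k:ℝ) * al a) / (8 * al a))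
      ≤ ∑ l ∈ s, c l * volume (Pmid a l) := by
        have hterm : ∀ l ∈ s, ENNReal.ofReal ((2:ℝ)^(-(k:ℝ) * al a - 3)) ≤ c l * volume (Pmid a l) := by
          intro l hl
          have hmem := Finset.mem_Ico.mp hl
          show ENNReal.ofReal ((2:ℝ)^(-(k:ℝ) * al a - 3))
              ≤ ENNReal.ofReal ((2:ℝ)^((l:ℝ)*(1 - al a))) * volume (Pmid a l)
          rw [Pmid, Real.volume_Ioo, ← ENNReal.ofReal_mul (by positivity)]
          apply ENNReal.ofReal_le_ofReal
          have hlen : (1 - al a) * (2:ℝ)^(-(l:ℤ)) - (1 + al a) * (2:ℝ)^(-(l:ℤ)-1)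
              = (1 - 3 * al a) * (2:ℝ)^(-(l:ℤ)-1) := by
            have := two_zpow_succ (-(l:ℤ)); nlinarith
          rw [hlen, ← rz (-(l:ℤ)-1)]
          have hcomb : (2:ℝ)^((l:ℝ)*(1 - al a)) * ((1 - 3*al a) * (2:ℝ)^(((-(l:ℤ)-1 : ℤ)):ℝ))
              = (1 - 3*al a) * (2:ℝ)^((l:ℝ)*(1 - al a) + ((-(l:ℤ)-1 : ℤ):ℝ)) := by
            rw [rp_add]; ring
          rw [hcomb]
          have hexple : (2:ℝ)^(-(k:ℝ) * al a - 2) ≤ (2:ℝ)^((l:ℝ)*(1 - al a) + ((-(l:ℤ)-1 : ℤ):ℝ)) := by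
            apply rp_mono
            push_cast
            -- -kα - 2 ≤ l(1-α) - l - 1 = -lα - 1, i.e. lα ≤ kα + 1
            have hl2 : (l:ℝ) ≤ (k:ℝ) + (2:ℝ)^(a:ℕ) := by
              have : (l:ℕ) ≤ k + 2^a := by omega
              calc (l:ℝ) ≤ ((k + 2^a : ℕ):ℝ) := by exact_mod_cast this
                _ = (k:ℝ) + (2:ℝ)^(a:ℕ) := by push_cast; ring
            have h2a : (2:ℝ)^(a:ℕ) * al a = 1 := by
              rw [← al_inv a]; exact inv_mul_cancel₀ (ne_of_gt ha0)
            nlinarith [mul_le_mul_of_nonneg_right hl2 ha0.le]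
          have h38 : (1:ℝ)/2 ≤ 1 - 3 * al a := by linarith
          have hq := rp_pos (-(k:ℝ) * al a - 2)
          have hq2 := rp_pos ((l:ℝ)*(1 - al a) + ((-(l:ℤ)-1 : ℤ):ℝ))
          calc (2:ℝ)^(-(k:ℝ) * al a - 3) = (1/2) * (2:ℝ)^(-(k:ℝ) * al a - 2) := by
                rw [show (-(k:ℝ) * al a - 2) = 1 + (-(k:ℝ) * al a - 3) by ring, rp_add,
                  Real.rpow_one]
                ring
            _ ≤ (1 - 3*al a) * (2:ℝ)^((l:ℝ)*(1 - al a) + ((-(l:ℤ)-1 : ℤ):ℝ)) := by nlinarith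
        calc ENNReal.ofReal ((2:ℝ)^(-(k:ℝ) * al a) / (8 * al a))
            = s.card • ENNReal.ofReal ((2:ℝ)^(-(k:ℝ) * al a - 3)) := by
              rw [hs, Nat.card_Ico, nsmul_eq_mul]
              rw [Nat.add_sub_cancel_left]
              rw [show ((2^a : ℕ) : ℝ≥0∞) = ENNReal.ofReal ((2:ℝ)^(a:ℕ)) by
                rw [← ENNReal.ofReal_natCast]; norm_num]
              rw [← ENNReal.ofReal_mul (by positivity)]
              congr 1
              rw [show ((-(k:ℝ)) * al a - 3) = (-(k:ℝ) * al a) + (-3) by ring, rp_add]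
              rw [show ((2:ℝ)^(-3:ℝ)) = 1/8 by
                rw [show (-3:ℝ) = ((-3:ℤ):ℝ) by norm_num, rz]; norm_num]
              rw [← al_inv a]
              field_simp
            _ ≤ ∑ l ∈ s, c l * volume (Pmid a l) :=
              Finset.card_nsmul_le_sum s _ _ hterm
    _ = ∑ l ∈ s, c l * (volume.restrict (Set.Ioo 0 ((2:ℝ)^(-(k:ℤ))))) (Pmid a l) := by
        apply Finset.sum_congr rfl
        intro l hl
        rw [Measure.restrict_apply (hPm l), Set.inter_eq_left.mpr (hPsub l hl)]
    _ = ∫⁻ x, (∑ l ∈ s, (Pmid a l).indicator (fun _ => c l) x)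
          ∂(volume.restrict (Set.Ioo 0 ((2:ℝ)^(-(k:ℤ))))) :=
        (lintegral_sum_ind s (Pmid a) c (fun l _ => hPm l) _).symm
    _ ≤ ∫⁻ x in Set.Ioo 0 ((2:ℝ)^(-(k:ℤ))), ENNReal.ofReal (lacWeight a x) :=
        lintegral_mono
          (sum_ind_le s (Pmid a) c (fun y => ENNReal.ofReal (lacWeight a y)) hdisj hle)

end Lac
namespace Lac

/-! ### Lower bounds for averages, `MB`, and the sparse operator -/

def Vk (a k : ℕ) : ℝ := (2:ℝ)^((k:ℝ)*(1 - al a)) / (8 * al a)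

lemma Vk_pos (a k : ℕ) : 0 < Vk a k := by
  have := al_pos a; have := rp_pos ((k:ℝ)*(1 - al a)); rw [Vk]; positivity

lemma avg_lower (a k : ℕ) (ha : 4 ≤ a) (hk : 1 ≤ k) :
    ENNReal.ofReal (Vk a k) ≤ avgE (ff a) 0 ((2:ℝ)^(-(k:ℤ))) := by
  have ha0 := al_pos a
  have hb0 : (0:ℝ) < (2:ℝ)^(-(k:ℤ)) := zpow_pos (by norm_num) _
  have hbh : (2:ℝ)^(-(k:ℤ)) ≤ 1/2 := block_lt_half k hk
  have hcong : ∫⁻ x in Set.Ioo 0 ((2:ℝ)^(-(k:ℤ))), ENNReal.ofReal |ff a x|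
      = ∫⁻ x in Set.Ioo 0 ((2:ℝ)^(-(k:ℤ))), ENNReal.ofReal (lacWeight a x) := by
    apply setLIntegral_congr_fun measurableSet_Ioo
    intro x hx
    have hx01 : x ∈ Set.Ico (0:ℝ) 1 := ⟨le_of_lt hx.1, by linarith [hx.2]⟩
    show ENNReal.ofReal |ff a x| = _
    rw [ff, Set.indicator_of_mem hx01,
      abs_of_nonneg (lac_nonneg_on a ha x hx.1 (by linarith [hx.2]))]
  rw [avgE, hcong, sub_zero]
  have hinv : (ENNReal.ofReal ((2:ℝ)^(-(k:ℤ))))⁻¹ = ENNReal.ofReal ((2:ℝ)^((k:ℤ))) := by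
    rw [← ENNReal.ofReal_inv_of_pos hb0, ← zpow_neg, neg_neg]
  rw [hinv]
  calc ENNReal.ofReal (Vk a k)
      = ENNReal.ofReal ((2:ℝ)^((k:ℤ))) * ENNReal.ofReal ((2:ℝ)^(-(k:ℝ) * al a) / (8 * al a)) := by
        rw [← ENNReal.ofReal_mul (le_of_lt (zpow_pos (by norm_num) _))]
        congr 1
        rw [Vk, ← rz (k:ℤ)]
        rw [show ((k:ℤ):ℝ) = (k:ℝ) by push_cast; ring]
        rw [div_eq_mul_inv, div_eq_mul_inv, ← mul_assoc, ← rp_add]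
        congr 2
        ring
    _ ≤ ENNReal.ofReal ((2:ℝ)^((k:ℤ)))
          * ∫⁻ x in Set.Ioo 0 ((2:ℝ)^(-(k:ℤ))), ENNReal.ofReal (lacWeight a x) :=
        mul_le_mul_right (mass_lower a ha k hk) _

lemma MB_lower (a k j : ℕ) (ha : 4 ≤ a) (hk : 1 ≤ k) (hj : k ≤ j) :
    ENNReal.ofReal (Vk a k)
      ≤ MB (ff a) ((2:ℝ)^(-(k:ℤ)) - (2:ℝ)^(-(j:ℤ))) ((2:ℝ)^(-(k:ℤ))) := by
  have h0 : (0:ℝ) ≤ (2:ℝ)^(-(k:ℤ)) - (2:ℝ)^(-(j:ℤ)) := by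
    have : (2:ℝ)^(-(j:ℤ)) ≤ (2:ℝ)^(-(k:ℤ)) := zpow_le_zpow_right₀ (by norm_num) (by omega)
    linarith
  have hb0 : (0:ℝ) < (2:ℝ)^(-(k:ℤ)) := zpow_pos (by norm_num) _
  calc ENNReal.ofReal (Vk a k) ≤ avgE (ff a) 0 ((2:ℝ)^(-(k:ℤ))) := avg_lower a k ha hk
    _ ≤ MB (ff a) ((2:ℝ)^(-(k:ℤ)) - (2:ℝ)^(-(j:ℤ))) ((2:ℝ)^(-(k:ℤ))) := by
        rw [MB]
        exact le_iSup_of_le 0 (le_iSup_of_le ((2:ℝ)^(-(k:ℤ)))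
          (le_iSup_of_le h0 (le_iSup_of_le le_rfl (le_iSup_of_le hb0 le_rfl))))

/-! ### The annuli -/

def Jn (a k m : ℕ) : ℕ := a + k + m

def Ann (a k m : ℕ) : Set ℝ :=
  Set.Ioo ((2:ℝ)^(-(k:ℤ)) - (2:ℝ)^(-(Jn a k m:ℤ))) ((2:ℝ)^(-(k:ℤ)) - (2:ℝ)^(-(Jn a k m:ℤ)-1))

lemma ann_t (a k m : ℕ) (ha : 4 ≤ a) (x : ℝ) (hx : x ∈ Ann a k m) :
    ((2:ℝ)^(-(Jn a k m:ℤ)-1) < (2:ℝ)^(-(k:ℤ)) - x ∧ (2:ℝ)^(-(k:ℤ)) - x < (2:ℝ)^(-(Jn a k m:ℤ)))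
    ∧ (1 - al a) * (2:ℝ)^(-(k:ℤ)) ≤ x ∧ x < (2:ℝ)^(-(k:ℤ)) ∧ (2:ℝ)^(-(k:ℤ)-1) ≤ x := by
  obtain ⟨hx1, hx2⟩ := hx
  have ha0 := al_pos a
  have ha16 := al_le a ha
  have hp0 : (0:ℝ) < (2:ℝ)^(-(k:ℤ)) := zpow_pos (by norm_num) _
  have hpJ : (0:ℝ) < (2:ℝ)^(-(Jn a k m:ℤ)-1) := zpow_pos (by norm_num) _
  have hJak : (2:ℝ)^(-(Jn a k m:ℤ)) ≤ al a * (2:ℝ)^(-(k:ℤ)) := by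
    have he : al a * (2:ℝ)^(-(k:ℤ)) = (2:ℝ)^(-(a:ℤ) + -(k:ℤ)) := by
      rw [zpow_add₀ (by norm_num : (2:ℝ) ≠ 0)]; rfl
    rw [he]
    apply zpow_le_zpow_right₀ (by norm_num)
    have : (a:ℤ) + (k:ℤ) ≤ (Jn a k m : ℤ) := by
      have : a + k ≤ Jn a k m := by rw [Jn]; omega
      exact_mod_cast this
    omega
  have h1a : (1 - al a) * (2:ℝ)^(-(k:ℤ)) ≤ x := by nlinarith
  have hxlt : x < (2:ℝ)^(-(k:ℤ)) := by linarith
  have hhalf : (2:ℝ)^(-(k:ℤ)-1) ≤ x := by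
    have := two_zpow_succ (-(k:ℤ))
    nlinarith
  exact ⟨⟨by linarith, by linarith⟩, h1a, hxlt, hhalf⟩

lemma ann_disj (a : ℕ) (ha : 4 ≤ a) {k m k' m' : ℕ} (hk : 1 ≤ k) (hk' : 1 ≤ k')
    (hne : (k, m) ≠ (k', m')) (x : ℝ) (hx : x ∈ Ann a k m) (hx' : x ∈ Ann a k' m') :
    False := by
  obtain ⟨⟨ht1, ht2⟩, _, hxlt, hhalf⟩ := ann_t a k m ha x hx
  obtain ⟨⟨ht1', ht2'⟩, _, hxlt', hhalf'⟩ := ann_t a k' m' ha x hx'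
  rcases Nat.lt_trichotomy k k' with h | h | h
  · have : (2:ℝ)^(-(k':ℤ)) ≤ (2:ℝ)^(-(k:ℤ)-1) :=
      zpow_le_zpow_right₀ (by norm_num) (by omega)
    linarith [hxlt', hhalf]
  · subst h
    have hJ : Jn a k m ≠ Jn a k m' := by
      rw [Jn, Jn]
      intro hc
      apply hne
      have : m = m' := by omega
      rw [this]
    exact block_disj hJ ((2:ℝ)^(-(k:ℤ)) - x) ht1 ht2 ht1' ht2'
  · have : (2:ℝ)^(-(k:ℤ)) ≤ (2:ℝ)^(-(k':ℤ)-1) :=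
      zpow_le_zpow_right₀ (by norm_num) (by omega)
    linarith
  
lemma vol_ann (a k m : ℕ) :
    volume (Ann a k m) = ENNReal.ofReal ((2:ℝ)^(-(Jn a k m:ℤ)-1)) := by
  rw [Ann, Real.volume_Ioo]
  congr 1
  have := two_zpow_succ (-(Jn a k m:ℤ))
  linarith

def Wlow (a k m : ℕ) : ℝ := al a * (2:ℝ)^(((Jn a k m:ℝ) - 2*(k:ℝ)) * (1 - al a))

lemma w_lower (a k m : ℕ) (ha : 4 ≤ a) (hk : 1 ≤ k) (x : ℝ) (hx : x ∈ Ann a k m) :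
    0 < lacWeight a x ∧ Wlow a k m ≤ (lacWeight a x)⁻¹ := by
  obtain ⟨⟨ht1, ht2⟩, h1a, hxlt, _⟩ := ann_t a k m ha x hx
  have ha0 := al_pos a
  have ht0 : (0:ℝ) < (2:ℝ)^(-(k:ℤ)) - x := lt_trans (zpow_pos (by norm_num) _) ht1
  rw [lac_outer a k hk ha x h1a hxlt]
  have hC : (0:ℝ) < (2:ℝ)^(2*(k:ℝ)*(1 - al a)) / al a := by
    have := rp_pos (2*(k:ℝ)*(1 - al a)); positivity
  have hpos : 0 < (2:ℝ)^(2*(k:ℝ)*(1 - al a)) / al a * ((2:ℝ)^(-(k:ℤ)) - x) ^ (1 - al a) :=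
    mul_pos hC (Real.rpow_pos_of_pos ht0 _)
  refine ⟨hpos, ?_⟩
  have hup : (2:ℝ)^(2*(k:ℝ)*(1 - al a)) / al a * ((2:ℝ)^(-(k:ℤ)) - x) ^ (1 - al a)
      ≤ (Wlow a k m)⁻¹ := by
    have hmono : ((2:ℝ)^(-(k:ℤ)) - x) ^ (1 - al a) ≤ ((2:ℝ)^(-(Jn a k m:ℤ))) ^ (1 - al a) :=
      Real.rpow_le_rpow (le_of_lt ht0) (le_of_lt ht2) (by linarith [al_le_one a])
    have hid : (2:ℝ)^(2*(k:ℝ)*(1 - al a)) / al a * ((2:ℝ)^(-(Jn a k m:ℤ))) ^ (1 - al a)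
        = (Wlow a k m)⁻¹ := by
      rw [Wlow, mul_inv, zpow_rpow, ← Real.rpow_neg (by norm_num : (0:ℝ) ≤ 2)]
      rw [div_eq_mul_inv, mul_comm ((2:ℝ)^(2*(k:ℝ)*(1 - al a))) (al a)⁻¹, mul_assoc, ← rp_add]
      congr 2
      push_cast
      ring
    calc (2:ℝ)^(2*(k:ℝ)*(1 - al a)) / al a * ((2:ℝ)^(-(k:ℤ)) - x) ^ (1 - al a)
        ≤ (2:ℝ)^(2*(k:ℝ)*(1 - al a)) / al a * ((2:ℝ)^(-(Jn a k m:ℤ))) ^ (1 - al a) :=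
          mul_le_mul_of_nonneg_left hmono (le_of_lt hC)
      _ = (Wlow a k m)⁻¹ := hid
  have hW : (0:ℝ) < Wlow a k m := by
    have := rp_pos (((Jn a k m:ℝ) - 2*(k:ℝ)) * (1 - al a)); rw [Wlow]; positivity
  have h := one_div_le_one_div_of_le hpos hup
  rw [one_div, one_div, inv_inv] at h
  exact h

end Lac
namespace Lac

lemma sparse_lower (a k m : ℕ) (ha : 4 ≤ a) (hk : 1 ≤ k) (x : ℝ) (hx : x ∈ Ann a k m) :
    ENNReal.ofReal (((m:ℝ)+1) * Vk a k) ≤ sparseOpStar (lacFamily a) (ff a) x := by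
  classical
  obtain ⟨⟨ht1, ht2⟩, h1a, hxlt, hhalf⟩ := ann_t a k m ha x hx
  have hpJ1 : (0:ℝ) < (2:ℝ)^(-(Jn a k m:ℤ)-1) := zpow_pos (by norm_num) _
  -- membership of each B_{k,j}
  have hmem : ∀ j, a + k ≤ j →
      ((2:ℝ)^(-(k:ℤ)) - (2:ℝ)^(-(j:ℤ)), (2:ℝ)^(-(k:ℤ))) ∈ lacFamily a :=
    fun j hj => ⟨k, j, hk, hj, rfl⟩
  have hxmem : ∀ j, a + k ≤ j → j ≤ Jn a k m →
      x ∈ Set.Ico ((2:ℝ)^(-(k:ℤ)) - (2:ℝ)^(-(j:ℤ))) ((2:ℝ)^(-(k:ℤ))) := by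
    intro j hj hjJ
    constructor
    · have : (2:ℝ)^(-(Jn a k m:ℤ)) ≤ (2:ℝ)^(-(j:ℤ)) :=
        zpow_le_zpow_right₀ (by norm_num) (by exact_mod_cast neg_le_neg (by exact_mod_cast hjJ))
      obtain ⟨hx1, _⟩ := hx
      linarith
    · exact hxlt
  set F : {y // y ∈ Finset.Icc (a+k) (Jn a k m)} → ↥(lacFamily a) :=
    (fun j => (⟨((2:ℝ)^(-(k:ℤ)) - (2:ℝ)^(-((j:ℕ):ℤ)), (2:ℝ)^(-(k:ℤ))),
        hmem (j:ℕ) (Finset.mem_Icc.mp j.2).1⟩ : ↥(lacFamily a))) with hF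
  set T : Finset ↥(lacFamily a) :=
    (Finset.Icc (a+k) (Jn a k m)).attach.image F with hT
  have hinj : Function.Injective F := by
    rw [hF]
    intro j j' hjj
    have h1 : ((2:ℝ)^(-(k:ℤ)) - (2:ℝ)^(-((j:ℕ):ℤ)) : ℝ)
        = (2:ℝ)^(-(k:ℤ)) - (2:ℝ)^(-((j':ℕ):ℤ)) := by
      have := congrArg (fun p : ↥(lacFamily a) => (p : ℝ × ℝ).1) hjj
      simpa using this
    have h2 : (2:ℝ)^(-((j:ℕ):ℤ)) = (2:ℝ)^(-((j':ℕ):ℤ)) := by linarith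
    have h3 : -((j:ℕ):ℤ) = -((j':ℕ):ℤ) :=
      zpow_right_injective₀ (by norm_num : (0:ℝ) < 2) (by norm_num) h2
    have h4 : (j:ℕ) = (j':ℕ) := by omega
    exact Subtype.ext h4
  have hcard : T.card = m + 1 := by
    rw [hT, Finset.card_image_of_injective _ hinj, Finset.card_attach, Nat.card_Icc]
    rw [Jn]; omega
  have hbound : ∀ p ∈ T,
      ENNReal.ofReal (Vk a k)
        ≤ (Set.Ico (p : ℝ × ℝ).1 (p : ℝ × ℝ).2).indicator
            (fun _ => MB (ff a) (p : ℝ × ℝ).1 (p : ℝ × ℝ).2) x := by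
    intro p hp
    rw [hT] at hp
    obtain ⟨j, _, rfl⟩ := Finset.mem_image.mp hp
    rw [hF]
    have hj1 := (Finset.mem_Icc.mp j.2).1
    have hj2 := (Finset.mem_Icc.mp j.2).2
    have hxm := hxmem (j:ℕ) hj1 hj2
    show ENNReal.ofReal (Vk a k) ≤ (Set.Ico ((2:ℝ)^(-(k:ℤ)) - (2:ℝ)^(-((j:ℕ):ℤ))) ((2:ℝ)^(-(k:ℤ)))).indicator
        (fun _ => MB (ff a) ((2:ℝ)^(-(k:ℤ)) - (2:ℝ)^(-((j:ℕ):ℤ))) ((2:ℝ)^(-(k:ℤ)))) x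
    rw [Set.indicator_of_mem hxm]
    exact MB_lower a k j ha hk (by omega)
  calc ENNReal.ofReal (((m:ℝ)+1) * Vk a k)
      = T.card • ENNReal.ofReal (Vk a k) := by
        rw [hcard, nsmul_eq_mul]
        rw [show (((m+1 : ℕ)) : ℝ≥0∞) = ENNReal.ofReal ((m:ℝ)+1) by
          rw [← ENNReal.ofReal_natCast]; norm_num]
        rw [← ENNReal.ofReal_mul (by positivity)]
    _ ≤ ∑ p ∈ T, (Set.Ico (p : ℝ × ℝ).1 (p : ℝ × ℝ).2).indicator
          (fun _ => MB (ff a) (p : ℝ × ℝ).1 (p : ℝ × ℝ).2) x :=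
        Finset.card_nsmul_le_sum T _ _ hbound
    _ ≤ sparseOpStar (lacFamily a) (ff a) x := by
        rw [sparseOpStar]
        exact ENNReal.sum_le_tsum T

end Lac
namespace Lac

lemma term_lower (a k m : ℕ) (ha : 4 ≤ a) (hk1 : 1 ≤ k) (hk2 : k ≤ 2^a) (hm : m < 2^a) :
    ((m:ℝ)+1)^2 / (1024 * al a)
      ≤ (((m:ℝ)+1) * Vk a k)^2 * Wlow a k m * (2:ℝ)^(-(Jn a k m:ℤ)-1) := by
  have ha0 := al_pos a
  have hid : (((m:ℝ)+1) * Vk a k)^2 * Wlow a k m * (2:ℝ)^(-(Jn a k m:ℤ)-1)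
      = ((m:ℝ)+1)^2 * ((2:ℝ)^((k:ℝ)*(1 - al a)) * (2:ℝ)^((k:ℝ)*(1 - al a))
          * (2:ℝ)^(((Jn a k m:ℝ) - 2*(k:ℝ))*(1 - al a)) * (2:ℝ)^(((-(Jn a k m:ℤ)-1 : ℤ):ℝ)))
        / (64 * al a) := by
    rw [Vk, Wlow, ← rz (-(Jn a k m:ℤ)-1)]
    field_simp
    ring
  have hpw : (2:ℝ)^((k:ℝ)*(1 - al a)) * (2:ℝ)^((k:ℝ)*(1 - al a))
      * (2:ℝ)^(((Jn a k m:ℝ) - 2*(k:ℝ))*(1 - al a)) * (2:ℝ)^(((-(Jn a k m:ℤ)-1 : ℤ):ℝ))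
      = (2:ℝ)^(-(Jn a k m:ℝ) * al a - 1) := by
    rw [← rp_add, ← rp_add, ← rp_add]
    congr 1
    push_cast
    ring
  rw [hid, hpw]
  have hJ3 : (Jn a k m : ℝ) * al a ≤ 3 := by
    have h2a : (2:ℝ)^(a:ℕ) * al a = 1 := by
      rw [← al_inv a]; exact inv_mul_cancel₀ (ne_of_gt ha0)
    have hka : (k:ℝ) * al a ≤ 1 := by
      have hkr : (k:ℝ) ≤ (2:ℝ)^(a:ℕ) := by exact_mod_cast Nat.cast_le.mpr hk2
      nlinarith
    have hma : (m:ℝ) * al a ≤ 1 := by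
      have hmr : (m:ℝ) ≤ (2:ℝ)^(a:ℕ) := by
        have : (m:ℕ) ≤ 2^a := by omega
        calc (m:ℝ) ≤ ((2^a : ℕ):ℝ) := by exact_mod_cast this
          _ = (2:ℝ)^(a:ℕ) := by push_cast; ring
      nlinarith
    have haa := mul_al_le_one a
    have : (Jn a k m : ℝ) = (a:ℝ) + (k:ℝ) + (m:ℝ) := by rw [Jn]; push_cast; ring
    rw [this]
    nlinarith
  have h16 : (1:ℝ)/16 ≤ (2:ℝ)^(-(Jn a k m:ℝ) * al a - 1) := by
    have : (2:ℝ)^((-4:ℝ)) = 1/16 := by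
      rw [show (-4:ℝ) = ((-4:ℤ):ℝ) by norm_num, rz]; norm_num
    rw [← this]
    exact rp_mono (by linarith)
  calc ((m:ℝ)+1)^2 / (1024 * al a) = ((m:ℝ)+1)^2 * (1/16) / (64 * al a) := by ring
    _ ≤ ((m:ℝ)+1)^2 * (2:ℝ)^(-(Jn a k m:ℝ) * al a - 1) / (64 * al a) := by
        gcongr
    _ = ((m:ℝ)+1)^2 * (2:ℝ)^(-(Jn a k m:ℝ) * al a - 1) / (64 * al a) := rfl

lemma sum_sq_lower (a : ℕ) (ha : 4 ≤ a) :
    (2:ℝ)^(3*a-3 : ℕ) ≤ ∑ m ∈ Finset.range (2^a), ((m:ℝ)+1)^2 := by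
  have hnat : (2:ℕ)^(3*a-3) ≤ ∑ m ∈ Finset.range (2^a), (m+1)^2 := by
    have hsplit : (2:ℕ)^a = 2 * 2^(a-1) := by
      rw [← pow_succ']
      congr 1
      omega
    calc (2:ℕ)^(3*a-3) = 2^(a-1) * (2^(a-1))^2 := by
          rw [← pow_mul, ← pow_add]
          congr 1
          omega
      _ = (Finset.Ico (2^(a-1)) (2^a)).card * (2^(a-1))^2 := by
          rw [Nat.card_Ico]
          congr 2
          omega
      _ ≤ ∑ m ∈ Finset.Ico (2^(a-1)) (2^a), (m+1)^2 := by
          rw [← smul_eq_mul]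
          apply Finset.card_nsmul_le_sum
          intro m hm
          have h := (Finset.mem_Ico.mp hm).1
          exact Nat.pow_le_pow_left (by omega) 2
      _ ≤ ∑ m ∈ Finset.range (2^a), (m+1)^2 := by
          apply Finset.sum_le_sum_of_subset
          intro m hm
          simp only [Finset.mem_Ico, Finset.mem_range] at hm ⊢
          omega
  calc (2:ℝ)^(3*a-3 : ℕ) = (((2:ℕ)^(3*a-3) : ℕ) : ℝ) := by push_cast; ring
    _ ≤ ((∑ m ∈ Finset.range (2^a), (m+1)^2 : ℕ) : ℝ) := by exact_mod_cast hnat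
    _ = ∑ m ∈ Finset.range (2^a), ((m:ℝ)+1)^2 := by push_cast; ring

lemma big_lower (a : ℕ) (ha : 4 ≤ a) :
    ENNReal.ofReal ((2:ℝ)^(4*a-3 : ℕ) / (1024 * al a))
      ≤ ∫⁻ x, (sparseOpStar (lacFamily a) (ff a) x)^2
          * ENNReal.ofReal ((lacWeight a x)⁻¹) := by
  classical
  have ha0 := al_pos a
  set F : Finset (ℕ × ℕ) := (Finset.Icc 1 (2^a)) ×ˢ (Finset.range (2^a)) with hF
  set T : ℕ × ℕ → Set ℝ := fun p => Ann a p.1 p.2 with hT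
  set c : ℕ × ℕ → ℝ≥0∞ :=
    fun p => ENNReal.ofReal ((((p.2:ℝ)+1) * Vk a p.1)^2 * Wlow a p.1 p.2) with hc
  have hmeas : ∀ p ∈ F, MeasurableSet (T p) := fun p _ => measurableSet_Ioo
  have hdisj : ∀ p ∈ F, ∀ q ∈ F, p ≠ q → ∀ x, x ∈ T p → x ∈ T q → False := by
    intro p hp q hq hne x hxp hxq
    have hp1 := (Finset.mem_Icc.mp (Finset.mem_product.mp hp).1).1
    have hq1 := (Finset.mem_Icc.mp (Finset.mem_product.mp hq).1).1
    exact ann_disj a ha hp1 hq1 (by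
      intro hc'
      apply hne
      exact Prod.ext (congrArg Prod.fst hc') (congrArg Prod.snd hc')) x hxp hxq
  have hle : ∀ p ∈ F, ∀ x ∈ T p,
      c p ≤ (sparseOpStar (lacFamily a) (ff a) x)^2 * ENNReal.ofReal ((lacWeight a x)⁻¹) := by
    intro p hp x hxp
    have hp1 := (Finset.mem_Icc.mp (Finset.mem_product.mp hp).1).1
    have hu0 : (0:ℝ) ≤ ((p.2:ℝ)+1) * Vk a p.1 := by
      have := Vk_pos a p.1; positivity
    have hW := w_lower a p.1 p.2 ha hp1 x hxp
    calc c p = ENNReal.ofReal ((((p.2:ℝ)+1) * Vk a p.1)^2)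
          * ENNReal.ofReal (Wlow a p.1 p.2) := by
          rw [hc, ← ENNReal.ofReal_mul (by positivity)]
      _ = (ENNReal.ofReal (((p.2:ℝ)+1) * Vk a p.1))^2 * ENNReal.ofReal (Wlow a p.1 p.2) := by
          rw [← ENNReal.ofReal_pow hu0]
      _ ≤ (sparseOpStar (lacFamily a) (ff a) x)^2
            * ENNReal.ofReal ((lacWeight a x)⁻¹) :=
          mul_le_mul' (pow_le_pow_left' (sparse_lower a p.1 p.2 ha hp1 x hxp) 2)
            (ENNReal.ofReal_le_ofReal hW.2)
  calc ENNReal.ofReal ((2:ℝ)^(4*a-3 : ℕ) / (1024 * al a))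
      ≤ ∑ p ∈ F, c p * volume (T p) := by
        have hterm : ∀ p ∈ F,
            ENNReal.ofReal (((p.2:ℝ)+1)^2 / (1024 * al a)) ≤ c p * volume (T p) := by
          intro p hp
          have hp1 := (Finset.mem_Icc.mp (Finset.mem_product.mp hp).1).1
          have hp2 := (Finset.mem_Icc.mp (Finset.mem_product.mp hp).1).2
          have hpm := Finset.mem_range.mp (Finset.mem_product.mp hp).2
          rw [hc, hT]
          show ENNReal.ofReal (((p.2:ℝ)+1)^2 / (1024 * al a))
            ≤ ENNReal.ofReal ((((p.2:ℝ)+1) * Vk a p.1)^2 * Wlow a p.1 p.2)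
              * volume (Ann a p.1 p.2)
          rw [vol_ann, ← ENNReal.ofReal_mul (by
            have := Vk_pos a p.1
            have hW : (0:ℝ) < Wlow a p.1 p.2 := by
              have := rp_pos (((Jn a p.1 p.2:ℝ) - 2*(p.1:ℝ)) * (1 - al a))
              rw [Wlow]; positivity
            positivity)]
          exact ENNReal.ofReal_le_ofReal (term_lower a p.1 p.2 ha hp1 hp2 hpm)
        calc ENNReal.ofReal ((2:ℝ)^(4*a-3 : ℕ) / (1024 * al a))
            ≤ ENNReal.ofReal (∑ p ∈ F, ((p.2:ℝ)+1)^2 / (1024 * al a)) := by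
              apply ENNReal.ofReal_le_ofReal
              rw [hF, Finset.sum_product]
              have hinner : ∀ k ∈ Finset.Icc 1 (2^a),
                  (2:ℝ)^(3*a-3 : ℕ) / (1024 * al a)
                    ≤ ∑ m ∈ Finset.range (2^a), ((m:ℝ)+1)^2 / (1024 * al a) := by
                intro k _
                rw [← Finset.sum_div]
                gcongr
                exact sum_sq_lower a ha
              have hcard : (Finset.Icc 1 (2^a)).card = 2^a := by
                rw [Nat.card_Icc, Nat.add_sub_cancel]
              have hstep := Finset.card_nsmul_le_sum (Finset.Icc 1 (2^a))
                (fun k => ∑ m ∈ Finset.range (2^a), ((m:ℝ)+1)^2 / (1024 * al a))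
                ((2:ℝ)^(3*a-3 : ℕ) / (1024 * al a)) hinner
              rw [hcard, nsmul_eq_mul] at hstep
              refine le_trans (le_of_eq ?_) hstep
              rw [show ((2^a : ℕ):ℝ) = (2:ℝ)^(a:ℕ) by push_cast; ring]
              rw [show (2:ℝ)^(a:ℕ) * ((2:ℝ)^(3*a-3 : ℕ) / (1024 * al a))
                  = ((2:ℝ)^(a:ℕ) * (2:ℝ)^(3*a-3 : ℕ)) / (1024 * al a) by ring, ← pow_add]
              congr 2
              omega
          _ = ∑ p ∈ F, ENNReal.ofReal (((p.2:ℝ)+1)^2 / (1024 * al a)) :=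
              ENNReal.ofReal_sum_of_nonneg (fun p _ => by positivity)
          _ ≤ ∑ p ∈ F, c p * volume (T p) := Finset.sum_le_sum hterm
    _ = ∫⁻ x, (∑ p ∈ F, (T p).indicator (fun _ => c p) x) :=
        (lintegral_sum_ind F T c hmeas volume).symm
    _ ≤ ∫⁻ x, (sparseOpStar (lacFamily a) (ff a) x)^2
          * ENNReal.ofReal ((lacWeight a x)⁻¹) :=
        lintegral_mono (sum_ind_le F T c _ hdisj hle)

end Lac
namespace Lac

/-! ### Measurability of the weight -/

def lacAux (a : ℕ) : ℝ → ℝ := fun y =>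
  let α : ℝ := (2 : ℝ) ^ (-(a : ℤ))
  if y = 0 then 1
  else if (1 / 2 : ℝ) ≤ y then y ^ (α - 1)
  else
    let k : ℤ := ⌈-Real.logb 2 y⌉ - 1
    if y < (1 + α) * (2 : ℝ) ^ (-(k + 1)) then
      (2 : ℝ) ^ (2 * (k : ℝ) * (1 - α)) / α * (y - (2 : ℝ) ^ (-(k + 1))) ^ (1 - α)
    else if y < (1 - α) * (2 : ℝ) ^ (-k) then y ^ (α - 1)
    else (2 : ℝ) ^ (2 * (k : ℝ) * (1 - α)) / α * ((2 : ℝ) ^ (-k) - y) ^ (1 - α)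

lemma lac_eq_aux (a : ℕ) : lacWeight a = fun x => lacAux a |x| := rfl

lemma lacAux_measurable (a : ℕ) : Measurable (lacAux a) := by
  have hlogb : Measurable fun y : ℝ => -Real.logb 2 y := by
    simp only [Real.logb]
    exact (Real.measurable_log.div_const _).neg
  have hL : Measurable fun y : ℝ => (⌈-Real.logb 2 y⌉ : ℤ) := hlogb.ceil
  have hz : ∀ g : ℤ → ℝ, Measurable fun y : ℝ => g ⌈-Real.logb 2 y⌉ :=
    fun g => (measurable_from_top (f := g)).comp hL
  unfold lacAux
  simp only []
  apply Measurable.ite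
  · exact MeasurableSet.congr (measurableSet_singleton (0:ℝ)) (by ext y; simp)
  · exact measurable_const
  apply Measurable.ite
  · exact measurableSet_le measurable_const measurable_id
  · exact measurable_id.pow measurable_const
  apply Measurable.ite
  · exact measurableSet_lt measurable_id
      ((hz (fun n => (1 + (2:ℝ)^(-(a:ℤ))) * (2:ℝ)^(-(n - 1 + 1)))))
  · exact Measurable.mul (hz (fun n => (2:ℝ)^(2 * ((n - 1 : ℤ):ℝ) * (1 - (2:ℝ)^(-(a:ℤ)))) / (2:ℝ)^(-(a:ℤ))))
      ((measurable_id.sub (hz (fun n => (2:ℝ)^(-(n - 1 + 1))))).pow measurable_const)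
  apply Measurable.ite
  · exact measurableSet_lt measurable_id
      ((hz (fun n => (1 - (2:ℝ)^(-(a:ℤ))) * (2:ℝ)^(-(n - 1)))))
  · exact measurable_id.pow measurable_const
  · exact Measurable.mul (hz (fun n => (2:ℝ)^(2 * ((n - 1 : ℤ):ℝ) * (1 - (2:ℝ)^(-(a:ℤ)))) / (2:ℝ)^(-(a:ℤ))))
      (((hz (fun n => (2:ℝ)^(-(n - 1)))).sub measurable_id).pow measurable_const)

lemma lac_measurable (a : ℕ) : Measurable (lacWeight a) := by
  rw [lac_eq_aux]
  exact (lacAux_measurable a).comp measurable_abs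

/-! ### Scaling -/

lemma avgE_smul (r : ℝ) (hr : 0 ≤ r) (f : ℝ → ℝ) (c d : ℝ) :
    avgE (fun x => r * f x) c d = ENNReal.ofReal r * avgE f c d := by
  unfold avgE
  have h1 : ∫⁻ x in Set.Ioo c d, ENNReal.ofReal |r * f x|
      = ENNReal.ofReal r * ∫⁻ x in Set.Ioo c d, ENNReal.ofReal |f x| := by
    rw [← lintegral_const_mul' (ENNReal.ofReal r) _ ENNReal.ofReal_ne_top]
    apply lintegral_congr
    intro x
    rw [abs_mul, abs_of_nonneg hr, ENNReal.ofReal_mul hr]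
  rw [h1, ← mul_assoc, mul_comm ((ENNReal.ofReal (d - c))⁻¹) (ENNReal.ofReal r), mul_assoc]

lemma MB_smul (r : ℝ) (hr : 0 ≤ r) (f : ℝ → ℝ) (c d : ℝ) :
    MB (fun x => r * f x) c d = ENNReal.ofReal r * MB f c d := by
  unfold MB
  simp_rw [avgE_smul r hr f, ENNReal.mul_iSup]

lemma sparse_smul (S : Set (ℝ × ℝ)) (r : ℝ) (hr : 0 ≤ r) (f : ℝ → ℝ) (x : ℝ) :
    sparseOpStar S (fun y => r * f y) x = ENNReal.ofReal r * sparseOpStar S f x := by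
  unfold sparseOpStar
  rw [← ENNReal.tsum_mul_left]
  apply tsum_congr
  intro p
  by_cases hx : x ∈ Set.Ico (p : ℝ × ℝ).1 (p : ℝ × ℝ).2
  · rw [Set.indicator_of_mem hx, Set.indicator_of_mem hx, MB_smul r hr]
  · rw [Set.indicator_of_notMem hx, Set.indicator_of_notMem hx, mul_zero]

lemma L2wE_smul (r : ℝ) (g : ℝ → ℝ≥0∞) (w : ℝ → ℝ) :
    L2wE (fun x => ENNReal.ofReal r * g x) w = ENNReal.ofReal r * L2wE g w := by
  unfold L2wE
  have h1 : ∀ x : ℝ, (ENNReal.ofReal r * g x)^2 * ENNReal.ofReal (w x)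
      = (ENNReal.ofReal r)^2 * (g x ^ 2 * ENNReal.ofReal (w x)) := by
    intro x; ring
  simp_rw [h1]
  rw [lintegral_const_mul' _ _ (ENNReal.pow_ne_top ENNReal.ofReal_ne_top)]
  rw [ENNReal.mul_rpow_of_nonneg _ _ (by norm_num : (0:ℝ) ≤ 1/2)]
  congr 1
  rw [← ENNReal.rpow_natCast (ENNReal.ofReal r) 2, ← ENNReal.rpow_mul]
  norm_num

lemma L2w_smul (r : ℝ) (hr : 0 ≤ r) (f : ℝ → ℝ) (w : ℝ → ℝ) :
    L2w (fun x => r * f x) w = ENNReal.ofReal r * L2w f w := by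
  unfold L2w
  have h1 : ∀ x : ℝ, ENNReal.ofReal ((r * f x)^2) * ENNReal.ofReal (w x)
      = (ENNReal.ofReal r)^2 * (ENNReal.ofReal (f x ^ 2) * ENNReal.ofReal (w x)) := by
    intro x
    rw [mul_pow, ENNReal.ofReal_mul (by positivity), ENNReal.ofReal_pow hr]
    ring
  simp_rw [h1]
  rw [lintegral_const_mul' _ _ (ENNReal.pow_ne_top ENNReal.ofReal_ne_top)]
  rw [ENNReal.mul_rpow_of_nonneg _ _ (by norm_num : (0:ℝ) ≤ 1/2)]
  congr 1
  rw [← ENNReal.rpow_natCast (ENNReal.ofReal r) 2, ← ENNReal.rpow_mul]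
  norm_num

end Lac
namespace Lac

lemma hq_pos (a : ℕ) : (0:ℝ) < (2:ℝ)^(-(1:ℝ) * al a) / (8 * al a) := by
  have := al_pos a; have := rp_pos (-(1:ℝ) * al a); positivity

lemma L2w_lb (a : ℕ) (ha : 4 ≤ a) :
    ENNReal.ofReal (((2:ℝ)^(-(1:ℝ) * al a) / (8 * al a)) ^ (1/2:ℝ))
      ≤ L2w (ff a) (fun x => (lacWeight a x)⁻¹) := by
  rw [L2w_ff a]
  have h1 : ENNReal.ofReal ((2:ℝ)^(-(1:ℝ) * al a) / (8 * al a))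
      ≤ ∫⁻ x in Set.Ico (0:ℝ) 1, ENNReal.ofReal (lacWeight a x) := by
    calc ENNReal.ofReal ((2:ℝ)^(-(1:ℝ) * al a) / (8 * al a))
        = ENNReal.ofReal ((2:ℝ)^(-((1:ℕ):ℝ) * al a) / (8 * al a)) := by norm_num
      _ ≤ ∫⁻ x in Set.Ioo 0 ((2:ℝ)^(-((1:ℕ):ℤ))), ENNReal.ofReal (lacWeight a x) :=
          mass_lower a ha 1 le_rfl
      _ ≤ ∫⁻ x in Set.Ico (0:ℝ) 1, ENNReal.ofReal (lacWeight a x) := by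
          apply lintegral_mono_set
          intro x hx
          have h2 : (2:ℝ)^(-((1:ℕ):ℤ)) = 1/2 := by norm_num
          rw [h2] at hx
          exact ⟨le_of_lt hx.1, by linarith [hx.2]⟩
  calc ENNReal.ofReal (((2:ℝ)^(-(1:ℝ) * al a) / (8 * al a)) ^ (1/2:ℝ))
      = (ENNReal.ofReal ((2:ℝ)^(-(1:ℝ) * al a) / (8 * al a))) ^ (1/2:ℝ) := by
        rw [← ENNReal.ofReal_rpow_of_nonneg (le_of_lt (hq_pos a)) (by norm_num)]
    _ ≤ (∫⁻ x in Set.Ico (0:ℝ) 1, ENNReal.ofReal (lacWeight a x)) ^ (1/2:ℝ) :=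
        ENNReal.rpow_le_rpow h1 (by norm_num)

lemma L2w_ub (a : ℕ) (ha : 4 ≤ a) :
    L2w (ff a) (fun x => (lacWeight a x)⁻¹) ≤ ENNReal.ofReal ((3 / al a) ^ (1/2:ℝ)) := by
  rw [L2w_ff a]
  have ha0 := al_pos a
  calc (∫⁻ x in Set.Ico (0:ℝ) 1, ENNReal.ofReal (lacWeight a x)) ^ (1/2:ℝ)
      ≤ (ENNReal.ofReal (3 / al a)) ^ (1/2:ℝ) :=
        ENNReal.rpow_le_rpow (integral_upper a ha) (by norm_num)
    _ = ENNReal.ofReal ((3 / al a) ^ (1/2:ℝ)) := by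
        rw [← ENNReal.ofReal_rpow_of_nonneg (by positivity) (by norm_num)]

lemma L2wE_lb (a : ℕ) (ha : 4 ≤ a) :
    ENNReal.ofReal (((2:ℝ)^(4*a-3 : ℕ) / (1024 * al a)) ^ (1/2:ℝ))
      ≤ L2wE (sparseOpStar (lacFamily a) (ff a)) (fun x => (lacWeight a x)⁻¹) := by
  rw [L2wE]
  have ha0 := al_pos a
  calc ENNReal.ofReal (((2:ℝ)^(4*a-3 : ℕ) / (1024 * al a)) ^ (1/2:ℝ))
      = (ENNReal.ofReal ((2:ℝ)^(4*a-3 : ℕ) / (1024 * al a))) ^ (1/2:ℝ) := by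
        rw [← ENNReal.ofReal_rpow_of_nonneg (by positivity) (by norm_num)]
    _ ≤ (∫⁻ x, (sparseOpStar (lacFamily a) (ff a) x)^2
          * ENNReal.ofReal ((lacWeight a x)⁻¹)) ^ (1/2:ℝ) :=
        ENNReal.rpow_le_rpow (big_lower a ha) (by norm_num)

lemma key_real (a : ℕ) (ha : 4 ≤ a) :
    ((1/1024 : ℝ) / (al a)^2) * ((3 / al a) ^ (1/2:ℝ))
      ≤ ((2:ℝ)^(4*a-3 : ℕ) / (1024 * al a)) ^ (1/2:ℝ) := by
  have ha0 := al_pos a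
  set u : ℝ := (1/1024 : ℝ) / (al a)^2 with hu
  have hu0 : 0 ≤ u := by positivity
  have ht0 : (0:ℝ) ≤ 3 / al a := by positivity
  have ha4 : (al a)^4 * (2:ℝ)^(4*a-3 : ℕ) = 1/8 := by
    have h1 : (al a)^4 = (2:ℝ)^((-(a:ℤ))*4) := by
      rw [al, ← zpow_natCast ((2:ℝ)^(-(a:ℤ))) 4, ← zpow_mul]
      norm_num
    have h2 : (2:ℝ)^(4*a-3 : ℕ) = (2:ℝ)^((4*a-3 : ℕ) : ℤ) := by
      rw [zpow_natCast]
    rw [h1, h2, ← zpow_add₀ (by norm_num : (2:ℝ) ≠ 0)]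
    have h3 : (-(a:ℤ))*4 + ((4*a-3 : ℕ) : ℤ) = -3 := by
      have : ((4*a-3 : ℕ) : ℤ) = 4*(a:ℤ) - 3 := by omega
      omega
    rw [h3]
    norm_num
  have hmain : u^2 * (3 / al a) ≤ (2:ℝ)^(4*a-3 : ℕ) / (1024 * al a) := by
    have hs : (2:ℝ)^(4*a-3 : ℕ) / (1024 * al a) = 1/(8192 * (al a)^5) := by
      rw [eq_div_iff (by positivity)]
      rw [div_mul_eq_mul_div, div_eq_one_iff_eq (by positivity)]
      linear_combination 8192 * al a * ha4
    have hlhs : u^2 * (3 / al a) = 3 / (1048576 * (al a)^5) := by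
      rw [hu]
      field_simp
      ring
    rw [hs, hlhs, div_le_div_iff₀ (by positivity) (by positivity)]
    nlinarith [pow_pos ha0 5]
  calc u * ((3 / al a) ^ (1/2:ℝ)) = (u^2 * (3 / al a)) ^ (1/2:ℝ) := by
        rw [Real.mul_rpow (by positivity) ht0]
        congr 1
        rw [← Real.rpow_natCast u 2, ← Real.rpow_mul hu0]
        norm_num
    _ ≤ ((2:ℝ)^(4*a-3 : ℕ) / (1024 * al a)) ^ (1/2:ℝ) :=
        Real.rpow_le_rpow (by positivity) hmain (by norm_num)

lemma al_sq (a : ℕ) : ((2:ℝ)^(-(a:ℤ)))^2 = (al a)^2 := rfl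

lemma part1 (a : ℕ) (ha : 4 ≤ a) :
    ENNReal.ofReal ((1/1024 : ℝ) / ((2:ℝ)^(-(a:ℤ)))^2)
        * L2w (ff a) (fun x => (lacWeight a x)⁻¹)
      ≤ L2wE (sparseOpStar (lacFamily a) (ff a)) (fun x => (lacWeight a x)⁻¹) := by
  have ha0 := al_pos a
  calc ENNReal.ofReal ((1/1024 : ℝ) / ((2:ℝ)^(-(a:ℤ)))^2)
        * L2w (ff a) (fun x => (lacWeight a x)⁻¹)
      ≤ ENNReal.ofReal ((1/1024 : ℝ) / (al a)^2) * ENNReal.ofReal ((3 / al a) ^ (1/2:ℝ)) := by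
        rw [al_sq]
        exact mul_le_mul_right (L2w_ub a ha) _
    _ = ENNReal.ofReal (((1/1024 : ℝ) / (al a)^2) * ((3 / al a) ^ (1/2:ℝ))) :=
        (ENNReal.ofReal_mul (by positivity)).symm
    _ ≤ ENNReal.ofReal (((2:ℝ)^(4*a-3 : ℕ) / (1024 * al a)) ^ (1/2:ℝ)) :=
        ENNReal.ofReal_le_ofReal (key_real a ha)
    _ ≤ L2wE (sparseOpStar (lacFamily a) (ff a)) (fun x => (lacWeight a x)⁻¹) := L2wE_lb a ha

lemma part2 (a : ℕ) (ha : 4 ≤ a) :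
    ENNReal.ofReal ((1/1024 : ℝ) / ((2:ℝ)^(-(a:ℤ)))^2)
      ≤ opNormStrong (lacFamily a) (fun x => (lacWeight a x)⁻¹) := by
  have ha0 := al_pos a
  set w : ℝ → ℝ := fun x => (lacWeight a x)⁻¹ with hw
  set L : ℝ≥0∞ := L2w (ff a) w with hL
  have hub : L ≤ ENNReal.ofReal ((3 / al a) ^ (1/2:ℝ)) := L2w_ub a ha
  have hlb : ENNReal.ofReal (((2:ℝ)^(-(1:ℝ) * al a) / (8 * al a)) ^ (1/2:ℝ)) ≤ L := L2w_lb a ha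
  have hLne : L ≠ ⊤ := ne_top_of_le_ne_top ENNReal.ofReal_ne_top hub
  have hL0 : L ≠ 0 := by
    intro h0
    rw [h0] at hlb
    have hpos : (0:ℝ) < ((2:ℝ)^(-(1:ℝ) * al a) / (8 * al a)) ^ (1/2:ℝ) :=
      Real.rpow_pos_of_pos (hq_pos a) _
    rw [le_zero_iff, ENNReal.ofReal_eq_zero] at hlb
    linarith
  set N : ℝ := L.toReal with hN
  have hN0 : 0 < N := ENNReal.toReal_pos hL0 hLne
  have hLN : L = ENNReal.ofReal N := by rw [hN, ENNReal.ofReal_toReal hLne]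
  set f' : ℝ → ℝ := fun x => N⁻¹ * ff a x with hf'
  have hmeas : Measurable f' := by
    apply Measurable.const_mul
    exact (lac_measurable a).indicator measurableSet_Ico
  have hL2wf' : L2w f' w = 1 := by
    rw [hf', L2w_smul N⁻¹ (by positivity) (ff a) w, ← hL, hLN,
      ← ENNReal.ofReal_mul (by positivity), inv_mul_cancel₀ (ne_of_gt hN0),
      ENNReal.ofReal_one]
  have hsp : ∀ x, sparseOpStar (lacFamily a) f' x
      = ENNReal.ofReal N⁻¹ * sparseOpStar (lacFamily a) (ff a) x := by
    intro x
    rw [hf']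
    exact sparse_smul (lacFamily a) N⁻¹ (by positivity) (ff a) x
  have hkey : ENNReal.ofReal ((1/1024 : ℝ) / ((2:ℝ)^(-(a:ℤ)))^2)
      ≤ L2wE (sparseOpStar (lacFamily a) f') w := by
    have he : L2wE (sparseOpStar (lacFamily a) f') w
        = ENNReal.ofReal N⁻¹ * L2wE (sparseOpStar (lacFamily a) (ff a)) w := by
      calc L2wE (sparseOpStar (lacFamily a) f') w
          = L2wE (fun x => ENNReal.ofReal N⁻¹ * sparseOpStar (lacFamily a) (ff a) x) w := by
            congr 1
            funext x
            exact hsp x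
        _ = ENNReal.ofReal N⁻¹ * L2wE (sparseOpStar (lacFamily a) (ff a)) w :=
            L2wE_smul N⁻¹ _ w
    rw [he]
    calc ENNReal.ofReal ((1/1024 : ℝ) / ((2:ℝ)^(-(a:ℤ)))^2)
        = ENNReal.ofReal N⁻¹ * (ENNReal.ofReal ((1/1024 : ℝ) / ((2:ℝ)^(-(a:ℤ)))^2)
            * ENNReal.ofReal N) := by
          rw [← mul_assoc, mul_comm (ENNReal.ofReal N⁻¹), mul_assoc,
            ← ENNReal.ofReal_mul (by positivity), inv_mul_cancel₀ (ne_of_gt hN0),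
            ENNReal.ofReal_one, mul_one]
      _ ≤ ENNReal.ofReal N⁻¹ * L2wE (sparseOpStar (lacFamily a) (ff a)) w := by
          apply mul_le_mul_right
          rw [← hLN]
          exact part1 a ha
  calc ENNReal.ofReal ((1/1024 : ℝ) / ((2:ℝ)^(-(a:ℤ)))^2)
      ≤ L2wE (sparseOpStar (lacFamily a) f') w := hkey
    _ ≤ opNormStrong (lacFamily a) w := by
        rw [opNormStrong]
        exact le_iSup_of_le f' (le_iSup_of_le hmeas (le_iSup_of_le (le_of_eq hL2wf') le_rfl))

end Lac

/-- Lower bound realizing the exponent `2` in the weighted strong-type estimate: for the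
lacunary weights `σ = lacWeight a`, `w = σ⁻¹` and the family `S = {B_{k,j}}`,
`‖𝒜*_S(σ·1_{[0,1)})‖_{L²(w)} ≥ c·α^{-2}·‖σ·1_{[0,1)}‖_{L²(w)}`, and in particular
`‖𝒜*_S‖_{L²(w)→L²(w)} ≥ c·α^{-2}`. -/
theorem strong_sparse_strong_lower_bound :
    ∃ c : ℝ, 0 < c ∧ ∃ a₀ : ℕ, 1 ≤ a₀ ∧
      ∀ a : ℕ, a₀ ≤ a →
        ENNReal.ofReal (c / ((2 : ℝ) ^ (-(a : ℤ))) ^ 2) *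
            L2w ((Set.Ico (0 : ℝ) 1).indicator (lacWeight a))
              (fun x => (lacWeight a x)⁻¹) ≤
          L2wE (sparseOpStar (lacFamily a) ((Set.Ico (0 : ℝ) 1).indicator (lacWeight a)))
            (fun x => (lacWeight a x)⁻¹) ∧
        ENNReal.ofReal (c / ((2 : ℝ) ^ (-(a : ℤ))) ^ 2) ≤
          opNormStrong (lacFamily a) (fun x => (lacWeight a x)⁻¹) := by
  refine ⟨1/1024, by norm_num, 4, by norm_num, ?_⟩
  intro a ha
  exact ⟨Lac.part1 a ha, Lac.part2 a ha⟩
end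
end
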